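/- arXiv:1002.0179 — 10 statements merged into one kernel-verified Lean document; each statement's English description precedes it below -/
import Mathlib

section
/- Let D be an integral domain, s ∈ D^n a finite sequence, f ∈ D[x] a nonzero annihilator of the first n-1 terms of s with nonzero discrepancy Δ_n(f) = (f·(s_1 x^{-1}+⋯+s_n x^{-n}))_{deg(f)-n} ≠ 0. Then every nonzero annihilator g of s satisfies deg(g) ≥ n - deg(f). -/
open Polynomial

/-- `f` annihilates the finite sequence `s 1, …, s n`:
`f = 0` or `f_0 s_{j-d} + ⋯ + f_d s_j = 0` for all `d+1 ≤ j ≤ n`, where `d = deg f`. -/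
def Annihilates {D : Type*} [CommRing D] (n : ℕ) (s : ℕ → D) (f : Polynomial D) : Prop :=
  f = 0 ∨ ∀ j : ℕ, f.natDegree + 1 ≤ j → j ≤ n →
    ∑ k ∈ Finset.range (f.natDegree + 1), f.coeff k * s (j - f.natDegree + k) = 0

/-- Linear complexity: minimal degree of a nonzero annihilator of `s 1, …, s n`. -/
noncomputable def LC {D : Type*} [CommRing D] (n : ℕ) (s : ℕ → D) : ℕ :=
  sInf {d | ∃ f : Polynomial D, f ≠ 0 ∧ Annihilates n s f ∧ f.natDegree = d}

/-- A minimal polynomial: a nonzero annihilator of minimal degree. -/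
def IsMinPoly {D : Type*} [CommRing D] (n : ℕ) (s : ℕ → D) (μ : Polynomial D) : Prop :=
  μ ≠ 0 ∧ Annihilates n s μ ∧ μ.natDegree = LC n s

/-- Discrepancy `Δ(f, s) = Σ_{k=0}^{d} f_k s_{n-d+k}` where `d = deg f`. -/
def Disc {D : Type*} [CommRing D] (n : ℕ) (s : ℕ → D) (f : Polynomial D) : D :=
  ∑ k ∈ Finset.range (f.natDegree + 1), f.coeff k * s (n - f.natDegree + k)

/-- The polynomial part `f_2` of the Laurent product `f · (s_1 x^{-1} + ⋯ + s_n x^{-n})`. -/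
noncomputable def polyPart {D : Type*} [CommRing D] (n : ℕ) (s : ℕ → D) (f : Polynomial D) :
    Polynomial D :=
  ∑ j ∈ Finset.range f.natDegree,
    Polynomial.C (∑ m ∈ Finset.Icc 1 n, f.coeff (j + m) * s m) * Polynomial.X ^ j

/-- The coefficient of `x^j` (for `j : ℤ`) in the Laurent product
`f · (s_1 x^{-1} + ⋯ + s_n x^{-n})`. -/
def laurentCoeff {D : Type*} [CommRing D] (n : ℕ) (s : ℕ → D) (f : Polynomial D) (j : ℤ) : D :=
  ∑ m ∈ Finset.Icc 1 n, if 0 ≤ j + (m : ℤ) then f.coeff (j + (m : ℤ)).toNat * s m else 0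

/-! Suppose `deg f + deg g < n` and put `c = n - deg f - deg g`. The double sum
`Σ_{i,k} g_i f_k s_{c+i+k}` can be summed in two orders. Summing over `i` first gives
`Σ_k f_k · (annihilation sum of g at c + deg g + k)`, which vanishes since `g` annihilates `s`.
Summing over `k` first gives `Σ_i g_i · (annihilation sum of f at c + deg f + i)`, where every
term but the last vanishes since `f` annihilates the first `n - 1` terms; the last one is
`lc(g) · Δ(f, s)`. Hence `lc(g) · Δ(f, s) = 0`, impossible in a domain. -/

section Annihilator

variable {D : Type*} [CommRing D]

/-- The left-hand side `f_0 s_{j-d} + ⋯ + f_d s_j` of the recurrence relation of `f` at `j`. -/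
def annihilatorSum (s : ℕ → D) (f : Polynomial D) (j : ℕ) : D :=
  ∑ k ∈ Finset.range (f.natDegree + 1), f.coeff k * s (j - f.natDegree + k)

theorem annihilates_iff {n : ℕ} {s : ℕ → D} {f : Polynomial D} :
    Annihilates n s f ↔
      f = 0 ∨ ∀ j, f.natDegree + 1 ≤ j → j ≤ n → annihilatorSum s f j = 0 :=
  Iff.rfl

theorem disc_eq_annihilatorSum (n : ℕ) (s : ℕ → D) (f : Polynomial D) :
    Disc n s f = annihilatorSum s f n :=
  rfl

theorem sum_coeff_mul_annihilatorSum_comm (s : ℕ → D) (f g : Polynomial D) (c : ℕ) :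
    ∑ i ∈ Finset.range (g.natDegree + 1),
        g.coeff i * annihilatorSum s f (c + f.natDegree + i) =
      ∑ k ∈ Finset.range (f.natDegree + 1),
        f.coeff k * annihilatorSum s g (c + g.natDegree + k) := by
  simp only [annihilatorSum, Finset.mul_sum]
  rw [Finset.sum_comm]
  refine Finset.sum_congr rfl fun k _ => Finset.sum_congr rfl fun i _ => ?_
  rw [show c + f.natDegree + i - f.natDegree + k = c + g.natDegree + k - g.natDegree + i by
    omega]
  ring

theorem leadingCoeff_mul_disc_eq_zero {n : ℕ} {s : ℕ → D} {f g : Polynomial D}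
    (hf : Annihilates (n - 1) s f) (hg : Annihilates n s g)
    (hdeg : f.natDegree + g.natDegree < n) :
    g.leadingCoeff * Disc n s f = 0 := by
  rcases annihilates_iff.mp hf with rfl | hf
  · simp [Disc]
  rcases annihilates_iff.mp hg with rfl | hg
  · simp
  obtain ⟨c, hc_pos, hc⟩ : ∃ c, 1 ≤ c ∧ n = c + f.natDegree + g.natDegree :=
    ⟨n - f.natDegree - g.natDegree, by omega, by omega⟩
  have hdouble_sum : ∑ k ∈ Finset.range (f.natDegree + 1),
      f.coeff k * annihilatorSum s g (c + g.natDegree + k) = 0 :=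
    Finset.sum_eq_zero fun k hk => by
      rw [Finset.mem_range] at hk
      rw [hg _ (by omega) (by omega), mul_zero]
  rw [← sum_coeff_mul_annihilatorSum_comm, Finset.sum_range_succ,
    Finset.sum_eq_zero fun i hi => ?_, zero_add] at hdouble_sum
  · rwa [disc_eq_annihilatorSum, hc]
  · rw [Finset.mem_range] at hi
    rw [hf _ (by omega) (by omega), mul_zero]

end Annihilator

theorem stmt_0_general {D : Type*} [CommRing D] [IsDomain D] (n : ℕ) (s : ℕ → D)
    (f : Polynomial D) (hf : Annihilates (n - 1) s f)
    (hΔ : Disc n s f ≠ 0)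
    (g : Polynomial D) (hg0 : g ≠ 0) (hg : Annihilates n s g) :
    (n : ℤ) - f.natDegree ≤ g.natDegree := by
  by_contra! hdeg
  have hzero := leadingCoeff_mul_disc_eq_zero hf hg (by omega)
  exact mul_ne_zero (leadingCoeff_ne_zero.mpr hg0) hΔ hzero

theorem stmt_0 {D : Type*} [CommRing D] [IsDomain D] (n : ℕ) (s : ℕ → D)
    (f : Polynomial D) (hf0 : f ≠ 0) (hf : Annihilates (n - 1) s f)
    (hΔ : Disc n s f ≠ 0)
    (g : Polynomial D) (hg0 : g ≠ 0) (hg : Annihilates n s g) :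
    (n : ℤ) - f.natDegree ≤ g.natDegree :=
  stmt_0_general n s f hf hΔ g hg0 hg
end

section
/- Let D be an integral domain, s ∈ D^n, and f ∈ D[x] an annihilator of s with deg(f) = d. Let k ≥ 0 be the highest power of x dividing f. Then the reciprocal polynomial f* annihilates the reversed, truncated sequence (s_n, s_{n-1},…, s_{k+1}). In particular, if x does not divide f, then f* annihilates the reversal (s_n,…,s_1) of s. -/
open Polynomial

theorem stmt_3 {D : Type*} [CommRing D] [IsDomain D] (n : ℕ) (s : ℕ → D)
    (f : Polynomial D) (hf : Annihilates n s f) (k : ℕ)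
    (hk : Polynomial.X ^ k ∣ f) (hk' : ¬ Polynomial.X ^ (k + 1) ∣ f) :
    Annihilates (n - k) (fun j => s (n + 1 - j)) f.reverse := by
  have hfne : f ≠ 0 := fun h => hk' (h ▸ dvd_zero _)
  set d := f.natDegree with hd
  clear_value d
  have hkd : k ≤ d := by
    rw [hd]
    simpa using Polynomial.natDegree_le_of_dvd hk hfne
  have ht : f.natTrailingDegree = k := by
    refine le_antisymm ?_ (Polynomial.le_natTrailingDegree hfne
      (Polynomial.X_pow_dvd_iff.mp hk))
    by_contra h
    exact hk' (Polynomial.X_pow_dvd_iff.mpr fun i hi =>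
      Polynomial.coeff_eq_zero_of_lt_natTrailingDegree (by omega))
  have he : f.reverse.natDegree = d - k := by
    have := f.natDegree_eq_reverse_natDegree_add_natTrailingDegree
    omega
  right
  intro j hj1 hj2
  rw [he] at hj1 ⊢
  have hjk : j + k ≤ n := by omega
  have hj3 : d + 1 ≤ n + 1 + d - (j + k) := by omega
  have hj4 : n + 1 + d - (j + k) ≤ n := by omega
  have hs := hf.resolve_left hfne (n + 1 + d - (j + k)) (hd ▸ hj3) hj4
  rw [← hd] at hs
  rw [← hs, ← Finset.sum_range_reflect (fun i => f.coeff i * s (n + 1 + d - (j + k) - d + i))]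
  refine (Finset.sum_subset (Finset.range_subset_range.mpr (by omega)) ?_).trans
    (Finset.sum_congr rfl ?_)
  · intro i hi hni
    simp only [Finset.mem_range] at hi hni
    rw [Polynomial.coeff_eq_zero_of_natDegree_lt (by omega), zero_mul]
  · intro i hi
    simp only [Finset.mem_range] at hi
    rw [Polynomial.coeff_reverse, Polynomial.revAt_le (hd ▸ (by omega : i ≤ d)), ← hd]
    show f.coeff (d - i) * s (n + 1 - (j - (d - k) + i)) = _
    have h1 : d - i = d + 1 - 1 - i := by omega
    have h2 : n + 1 - (j - (d - k) + i) = n + 1 + d - (j + k) - d + (d + 1 - 1 - i) := by omega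
    rw [h1, h2]
end

section
/- Let D be an integral domain, n ≥ 2, s ∈ D^n, and f, g ∈ D[x] annihilators of s. Suppose x divides f, f/x does not annihilate (s_1,…,s_{n-1}), and x does not divide g. Then deg(g) ≥ n + 1 - deg(f). -/
open Polynomial

/-!
Write `f = x f'` and suppose `deg f + deg g ≤ n`. Evaluate `∑_{l,k} g_l f_k s_{l+k}` in two ways.
Summing over `l` first, each inner sum with `k ≥ 1` is a window of `g` inside `s_1, …, s_n`, and
`f_0 = 0`; so the total is `0`. Summing over `k` first, each inner sum with `l ≥ 1` is a window of `f`,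
leaving `g_0 (f'_0 s_1 + ⋯ + f'_d s_{d+1})`. Every other window of `f'` inside `s_1, …, s_{n-1}` is a
window of `f`, so this last factor is nonzero because `f'` does not annihilate `s_1, …, s_{n-1}`.
-/

section WindowSum

variable {D : Type*} [CommRing D] {n : ℕ} {s : ℕ → D} {f g : D[X]}

def windowSum (s : ℕ → D) (f : D[X]) (i : ℕ) : D :=
  ∑ k ∈ Finset.range (f.natDegree + 1), f.coeff k * s (i + k)

theorem annihilates_iff_windowSum :
    Annihilates n s f ↔ ∀ i, 1 ≤ i → i + f.natDegree ≤ n → windowSum s f i = 0 := by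
  constructor
  · rintro (rfl | h) i hi hin
    · simp [windowSum]
    · simpa [windowSum] using h (i + f.natDegree) (by omega) hin
  · intro h
    refine Or.inr fun j hj hjn => ?_
    simpa [windowSum] using h (j - f.natDegree) (by omega) (by omega)

theorem Annihilates.windowSum_eq_zero (h : Annihilates n s f) {i : ℕ} (hi : 1 ≤ i)
    (hin : i + f.natDegree ≤ n) : windowSum s f i = 0 :=
  annihilates_iff_windowSum.mp h i hi hin

theorem windowSum_X_mul [Nontrivial D] (s : ℕ → D) (f : D[X]) (i : ℕ) :
    windowSum s (X * f) i = windowSum s f (i + 1) := by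
  rcases eq_or_ne f 0 with rfl | hf
  · simp [windowSum]
  rw [windowSum, natDegree_X_mul hf, Finset.sum_range_succ', coeff_X_mul_zero, zero_mul,
    add_zero, windowSum]
  refine Finset.sum_congr rfl fun k _ => ?_
  rw [coeff_X_mul, add_comm k 1, add_assoc]

theorem Annihilates.of_X_mul [Nontrivial D] (h : Annihilates n s (X * f))
    (h₁ : windowSum s f 1 = 0) : Annihilates (n - 1) s f := by
  rcases eq_or_ne f 0 with rfl | hf
  · exact Or.inl rfl
  rw [annihilates_iff_windowSum]
  intro i hi hin
  obtain rfl | hi := hi.eq_or_lt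
  · exact h₁
  have h_prev := h.windowSum_eq_zero (i := i - 1) (by omega) (by rw [natDegree_X_mul hf]; omega)
  rwa [windowSum_X_mul, Nat.sub_add_cancel hi.le] at h_prev

theorem sum_coeff_mul_windowSum_comm (s : ℕ → D) (f g : D[X]) (i : ℕ) :
    ∑ l ∈ Finset.range (g.natDegree + 1), g.coeff l * windowSum s f (i + l) =
      ∑ k ∈ Finset.range (f.natDegree + 1), f.coeff k * windowSum s g (i + k) := by
  simp only [windowSum, Finset.mul_sum]
  rw [Finset.sum_comm]
  refine Finset.sum_congr rfl fun k _ => Finset.sum_congr rfl fun l _ => ?_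
  rw [add_right_comm]
  ring

theorem Annihilates.coeff_zero_mul_windowSum_zero_eq_zero (hf : Annihilates n s f)
    (hg : Annihilates n s g) (hf₀ : f.coeff 0 = 0) (hdeg : f.natDegree + g.natDegree ≤ n) :
    g.coeff 0 * windowSum s f 0 = 0 := by
  have hsum := sum_coeff_mul_windowSum_comm s f g 0
  simp only [zero_add] at hsum
  have sum_over_f_windows :
      ∑ l ∈ Finset.range (g.natDegree + 1), g.coeff l * windowSum s f l =
        g.coeff 0 * windowSum s f 0 := by
    rw [Finset.sum_range_succ', Finset.sum_eq_zero, zero_add]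
    intro l hl
    rw [hf.windowSum_eq_zero (by omega) (by simp at hl; omega), mul_zero]
  have sum_over_g_windows :
      ∑ k ∈ Finset.range (f.natDegree + 1), f.coeff k * windowSum s g k = 0 := by
    refine Finset.sum_eq_zero fun k hk => ?_
    rcases k.eq_zero_or_pos with rfl | hk₀
    · rw [hf₀, zero_mul]
    · rw [hg.windowSum_eq_zero hk₀ (by simp at hk; omega), mul_zero]
  rw [← sum_over_f_windows, hsum, sum_over_g_windows]

end WindowSum

theorem stmt_4_general {D : Type*} [CommRing D] [IsDomain D] (n : ℕ) (s : ℕ → D)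
    (f g : Polynomial D) (hf : Annihilates n s f) (hg : Annihilates n s g)
    (hxf : Polynomial.X ∣ f)
    (hfx : ∀ f' : Polynomial D, f = Polynomial.X * f' → ¬ Annihilates (n - 1) s f')
    (hxg : ¬ Polynomial.X ∣ g) :
    (n : ℤ) + 1 - f.natDegree ≤ g.natDegree := by
  obtain ⟨f', rfl⟩ := hxf
  have hg₀ : g.coeff 0 ≠ 0 := mt X_dvd_iff.mpr hxg
  have hΔ : windowSum s f' 1 ≠ 0 := fun h => hfx f' rfl (hf.of_X_mul h)
  by_contra! hlt
  have hdeg : (X * f').natDegree + g.natDegree ≤ n := by omega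
  have hzero := hf.coeff_zero_mul_windowSum_zero_eq_zero hg (coeff_X_mul_zero f') hdeg
  rw [windowSum_X_mul, zero_add] at hzero
  exact mul_ne_zero hg₀ hΔ hzero

theorem stmt_4 {D : Type*} [CommRing D] [IsDomain D] (n : ℕ) (hn : 2 ≤ n) (s : ℕ → D)
    (f g : Polynomial D) (hf : Annihilates n s f) (hg : Annihilates n s g)
    (hxf : Polynomial.X ∣ f)
    (hfx : ∀ f' : Polynomial D, f = Polynomial.X * f' → ¬ Annihilates (n - 1) s f')
    (hxg : ¬ Polynomial.X ∣ g) :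
    (n : ℤ) + 1 - f.natDegree ≤ g.natDegree :=
  stmt_4_general n s f g hf hg hxf hfx hxg
end

section
/- Let D be an integral domain, s ∈ D^n, and let μ be a minimal polynomial of s with μ(0) = 0. Then the linear complexity of the reversed sequence (s_n,…,s_1) is at least n + 1 - LC(s). -/
open Polynomial

theorem stmt_7 {D : Type*} [CommRing D] [IsDomain D] (n : ℕ) (s : ℕ → D)
    (μ : Polynomial D) (hμ : IsMinPoly n s μ) (h0 : μ.eval 0 = 0) :
    (n : ℤ) + 1 - LC n s ≤ LC n (fun j => s (n + 1 - j)) := by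
  by_contra hcon
  push_neg at hcon
  obtain ⟨hμne, hμann, hμdeg⟩ := hμ
  obtain ⟨ν, hν⟩ : (X : Polynomial D) ∣ μ := by
    rwa [X_dvd_iff, coeff_zero_eq_eval_zero]
  have hνne : ν ≠ 0 := by
    rintro rfl
    rw [mul_zero] at hν
    exact hμne hν
  have hdeg : μ.natDegree = ν.natDegree + 1 := by
    rw [hν, natDegree_mul X_ne_zero hνne, natDegree_X, add_comm]
  set L := LC n s with hL
  set dν := ν.natDegree with hdν
  have hLd : L = dν + 1 := by rw [← hμdeg, hdeg]
  -- the set for the reversed sequence is nonempty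
  have hne : {d | ∃ f : Polynomial D, f ≠ 0 ∧
      Annihilates n (fun j => s (n + 1 - j)) f ∧ f.natDegree = d}.Nonempty := by
    refine ⟨n, X ^ n, pow_ne_zero _ X_ne_zero, Or.inr ?_, natDegree_X_pow n⟩
    intro j hj hj'
    rw [natDegree_X_pow] at hj
    omega
  obtain ⟨g, hgne, hgann, hgdeg⟩ := Nat.sInf_mem hne
  set e := LC n (fun j => s (n + 1 - j)) with he
  have hgdeg' : g.natDegree = e := hgdeg
  have hsum : e + L ≤ n := by
    have : (e : ℤ) < (n : ℤ) + 1 - (L : ℤ) := hcon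
    omega
  -- the truncated sequence
  set σ : ℕ → D := fun t => if 1 ≤ t ∧ t ≤ n then s t else 0 with hσ
  have hσeq : ∀ t, 1 ≤ t → t ≤ n → σ t = s t := by
    intro t h1 h2
    simp [hσ, h1, h2]
  -- Fact A : ν annihilates all windows starting at i ≥ 2
  have hμann' := hμann.resolve_left hμne
  have factA : ∀ i, 2 ≤ i → i + dν ≤ n →
      ∑ k ∈ Finset.range (dν + 1), ν.coeff k * σ (i + k) = 0 := by
    intro i hi2 hin
    have hw := hμann' (i + dν) (by omega) (by omega)
    rw [hdeg] at hw
    rw [Finset.sum_range_succ'] at hw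
    have hc0 : μ.coeff 0 = 0 := by rwa [coeff_zero_eq_eval_zero]
    rw [hc0, zero_mul, add_zero] at hw
    rw [← hw]
    refine Finset.sum_congr rfl fun k hk => ?_
    rw [Finset.mem_range] at hk
    have hck : μ.coeff (k + 1) = ν.coeff k := by rw [hν, coeff_X_mul]
    have h2 : i + dν - (dν + 1) + (k + 1) = i + k := by omega
    rw [hck, h2, hσeq (i + k) (by omega) (by omega)]
  -- Fact B : the reversal of g annihilates all windows of s
  have hgann' := hgann.resolve_left hgne
  have factB : ∀ i, 1 ≤ i → i + e ≤ n →
      ∑ k ∈ Finset.range (e + 1), g.coeff (e - k) * σ (i + k) = 0 := by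
    intro i hi1 hin
    have hw := hgann' (n + 1 - i) (by omega) (by omega)
    rw [hgdeg'] at hw
    rw [← hw, ← Finset.sum_range_reflect]
    refine Finset.sum_congr rfl fun k hk => ?_
    rw [Finset.mem_range] at hk
    have h1 : e - (e + 1 - 1 - k) = k := by omega
    have h2 : i + (e + 1 - 1 - k) = n + 1 - (n + 1 - i - e + k) := by omega
    rw [h1, h2, hσeq (n + 1 - (n + 1 - i - e + k)) (by omega) (by omega)]
  -- the discrepancy of ν at the first window
  set Δ : D := ∑ l ∈ Finset.range (dν + 1), ν.coeff l * σ (1 + l) with hΔ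
  have hΔne : Δ ≠ 0 := by
    intro hΔ0
    have hann : Annihilates n s ν := by
      refine Or.inr fun j hj hjn => ?_
      rw [← hdν] at hj ⊢
      have hcongr : ∑ k ∈ Finset.range (dν + 1), ν.coeff k * s (j - dν + k)
          = ∑ k ∈ Finset.range (dν + 1), ν.coeff k * σ ((j - dν) + k) := by
        refine Finset.sum_congr rfl fun k hk => ?_
        rw [Finset.mem_range] at hk
        rw [hσeq _ (by omega) (by omega)]
      rw [hcongr]
      rcases eq_or_lt_of_le hj with heq | hlt
      · have : j - dν = 1 := by omega
        rw [this, ← hΔ]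
        exact hΔ0
      · exact factA (j - dν) (by omega) (by omega)
    have hle : L ≤ dν := Nat.sInf_le ⟨ν, hνne, hann, rfl⟩
    omega
  -- the double sum, computed two ways
  have key1 : ∑ k ∈ Finset.range (e + 1), ∑ l ∈ Finset.range (dν + 1),
      g.coeff (e - k) * (ν.coeff l * σ (1 + k + l)) = g.coeff e * Δ := by
    rw [Finset.sum_eq_single 0]
    · rw [hΔ, Finset.mul_sum]
      refine Finset.sum_congr rfl fun l hl => ?_
      have h : (1 : ℕ) + 0 + l = 1 + l := by omega
      rw [Nat.sub_zero, h]
    · intro k hk hk0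
      rw [Finset.mem_range] at hk
      rw [← Finset.mul_sum, factA (1 + k) (by omega) (by omega), mul_zero]
    · intro h
      exact absurd (Finset.mem_range.mpr (Nat.succ_pos e)) h
  have key2 : ∑ k ∈ Finset.range (e + 1), ∑ l ∈ Finset.range (dν + 1),
      g.coeff (e - k) * (ν.coeff l * σ (1 + k + l)) = 0 := by
    rw [Finset.sum_comm]
    refine Finset.sum_eq_zero fun l hl => ?_
    rw [Finset.mem_range] at hl
    have heq : ∀ k ∈ Finset.range (e + 1),
        g.coeff (e - k) * (ν.coeff l * σ (1 + k + l))
        = ν.coeff l * (g.coeff (e - k) * σ ((1 + l) + k)) := by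
      intro k _
      have : 1 + k + l = (1 + l) + k := by omega
      rw [this]
      ring
    rw [Finset.sum_congr rfl heq, ← Finset.mul_sum,
      factB (1 + l) (by omega) (by omega), mul_zero]
  have : g.coeff e * Δ = 0 := by rw [← key1, key2]
  rcases mul_eq_zero.mp this with h | h
  · rw [← hgdeg'] at h
    exact hgne (leadingCoeff_eq_zero.mp h)
  · exact hΔne h
end

section
/- Let D be a factorial (unique factorization) domain, s ∈ D^n with n = 2·LC(s), and let μ be the unique (up to unit) minimal polynomial of s. Then the linear complexity of the reversed sequence (s_n,…,s_1) equals LC(s) if μ(0) ≠ 0, and equals LC(s) + 1 if μ(0) = 0. -/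
open Polynomial

namespace Stmt8

open Finset

variable {D : Type*} [CommRing D]

/-- window sum -/
def E (s : ℕ → D) (f : Polynomial D) (i : ℕ) : D :=
  ∑ k ∈ Finset.range (f.natDegree + 1), f.coeff k * s (i + k)

theorem annihilates_iff {n : ℕ} {s : ℕ → D} {f : Polynomial D} :
    Annihilates n s f ↔ (f = 0 ∨ ∀ i : ℕ, 1 ≤ i → i + f.natDegree ≤ n → E s f i = 0) := by
  unfold Annihilates E
  constructor
  · rintro (h | h)
    · exact Or.inl h
    · refine Or.inr fun i h1 h2 => ?_
      have := h (i + f.natDegree) (by omega) (by omega)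
      simpa using this
  · rintro (h | h)
    · exact Or.inl h
    · refine Or.inr fun j h1 h2 => ?_
      have := h (j - f.natDegree) (by omega) (by omega)
      simpa [Nat.sub_add_cancel, (by omega : j - f.natDegree + f.natDegree = j)] using this

theorem sum_range_coeff_congr {M : ℕ} {f : Polynomial D} (hf : f.natDegree ≤ M) (g : ℕ → D) :
    ∑ k ∈ Finset.range (M + 1), f.coeff k * g k
      = ∑ k ∈ Finset.range (f.natDegree + 1), f.coeff k * g k := by
  refine (Finset.sum_subset (Finset.range_subset_range.2 (by omega)) fun x _ hx => ?_).symm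
  have : f.natDegree < x := by simp at hx; omega
  rw [f.coeff_eq_zero_of_natDegree_lt this, zero_mul]

theorem lc_eq_zero_of_le {n : ℕ} {s : ℕ → D} {f : Polynomial D} {j : ℤ}
    (h : (f.natDegree : ℤ) ≤ j) : laurentCoeff n s f j = 0 := by
  unfold laurentCoeff
  refine Finset.sum_eq_zero fun m hm => ?_
  simp only [Finset.mem_Icc] at hm
  have h0 : 0 ≤ j + (m : ℤ) := by omega
  rw [if_pos h0, f.coeff_eq_zero_of_natDegree_lt (by omega), zero_mul]

theorem lc_neg_eq_E {n : ℕ} {s : ℕ → D} {f : Polynomial D} {i : ℕ}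
    (h1 : 1 ≤ i) (h2 : i + f.natDegree ≤ n) :
    laurentCoeff n s f (-(i : ℤ)) = E s f i := by
  unfold laurentCoeff
  have step1 : ∑ m ∈ Finset.Icc 1 n,
      (if 0 ≤ -(i:ℤ) + (m:ℤ) then f.coeff (-(i:ℤ) + (m:ℤ)).toNat * s m else 0)
      = ∑ m ∈ Finset.Icc i n, f.coeff (m - i) * s m := by
    rw [← Finset.sum_subset (Finset.Icc_subset_Icc_left h1) (fun x hx hnx => ?_)]
    · refine Finset.sum_congr rfl fun m hm => ?_
      simp only [Finset.mem_Icc] at hm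
      rw [if_pos (by omega)]
      have ht : (-(i:ℤ) + (m:ℤ)).toNat = m - i := by omega
      rw [ht]
    · simp only [Finset.mem_Icc] at hx hnx
      push_neg at hnx
      rw [if_neg (by omega)]
  rw [step1]
  have step2 : ∑ m ∈ Finset.Icc i n, f.coeff (m - i) * s m
      = ∑ k ∈ Finset.range (n + 1 - i), f.coeff k * s (i + k) := by
    rw [← Finset.Ico_add_one_right_eq_Icc, Finset.sum_Ico_eq_sum_range]
    refine Finset.sum_congr rfl fun k _ => ?_
    congr 2
    omega
  rw [step2, (by omega : n + 1 - i = (n - i) + 1)]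
  exact sum_range_coeff_congr (by omega) fun k => s (i + k)


theorem coeff_mul_int (f g : Polynomial D) (t : ℤ) :
    ∑ a ∈ Finset.range (f.natDegree + 1),
      f.coeff a * (if 0 ≤ t - (a : ℤ) then g.coeff (t - (a : ℤ)).toNat else 0)
      = if 0 ≤ t then (f * g).coeff t.toNat else 0 := by
  rcases lt_or_ge t 0 with ht | ht
  · rw [if_neg (by omega)]
    refine Finset.sum_eq_zero fun a _ => ?_
    rw [if_neg (by omega), mul_zero]
  · rw [if_pos ht]
    set T := t.toNat with hT
    rw [Polynomial.coeff_mul, Finset.Nat.sum_antidiagonal_eq_sum_range_succ_mk]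
    have key : ∀ a : ℕ, f.coeff a * (if 0 ≤ t - (a:ℤ) then g.coeff (t - (a:ℤ)).toNat else 0)
        = (if a ≤ T then f.coeff a * g.coeff (T - a) else 0) := by
      intro a
      rcases le_or_gt a T with h | h
      · rw [if_pos (by omega), if_pos h]
        congr 2
        omega
      · rw [if_neg (by omega), if_neg (by omega), mul_zero]
    simp only [key]
    set M := max (f.natDegree + 1) (T + 1) with hM
    have e1 : ∑ a ∈ Finset.range (f.natDegree + 1),
        (if a ≤ T then f.coeff a * g.coeff (T - a) else 0)
        = ∑ a ∈ Finset.range M, (if a ≤ T then f.coeff a * g.coeff (T - a) else 0) := by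
      refine Finset.sum_subset (Finset.range_subset_range.2 (by omega)) fun x hx hnx => ?_
      simp only [Finset.mem_range] at hx hnx
      split_ifs
      · rw [f.coeff_eq_zero_of_natDegree_lt (by omega), zero_mul]
      · rfl
    have e2 : ∑ a ∈ Finset.range (T + 1), f.coeff a * g.coeff (T - a)
        = ∑ a ∈ Finset.range M, (if a ≤ T then f.coeff a * g.coeff (T - a) else 0) := by
      rw [← Finset.sum_subset (Finset.range_subset_range.2 (by omega) :
          Finset.range (T+1) ⊆ Finset.range M) (fun x hx hnx => ?_)]
      · refine Finset.sum_congr rfl fun a ha => ?_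
        simp only [Finset.mem_range] at ha
        rw [if_pos (by omega)]
      · simp only [Finset.mem_range] at hx hnx
        rw [if_neg (by omega)]
    rw [e1, e2]

theorem lc_mul (n : ℕ) (s : ℕ → D) (f g : Polynomial D) (t : ℤ) :
    laurentCoeff n s (f * g) t
      = ∑ a ∈ Finset.range (f.natDegree + 1), f.coeff a * laurentCoeff n s g (t - (a:ℤ)) := by
  unfold laurentCoeff
  simp only [Finset.mul_sum]
  rw [Finset.sum_comm]
  refine Finset.sum_congr rfl fun m hm => ?_
  have harg : ∀ a : ℕ, t - (a:ℤ) + (m:ℤ) = (t + m) - a := fun a => by ring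
  simp only [harg]
  have e : ∀ a ∈ Finset.range (f.natDegree + 1),
      f.coeff a * (if 0 ≤ t + (m:ℤ) - (a:ℤ) then g.coeff (t + (m:ℤ) - (a:ℤ)).toNat * s m else 0)
      = (f.coeff a * (if 0 ≤ t + (m:ℤ) - (a:ℤ) then g.coeff (t + (m:ℤ) - (a:ℤ)).toNat else 0)) * s m :=
    fun a _ => by split_ifs <;> ring
  rw [Finset.sum_congr rfl e, ← Finset.sum_mul, coeff_mul_int f g (t + (m:ℤ))]
  split_ifs <;> simp

theorem lc_nonneg (n : ℕ) (s : ℕ → D) (f : Polynomial D) (t : ℕ) :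
    laurentCoeff n s f (t : ℤ) = ∑ m ∈ Finset.Icc 1 n, f.coeff (t + m) * s m := by
  unfold laurentCoeff
  refine Finset.sum_congr rfl fun m hm => ?_
  rw [if_pos (by positivity)]
  have h : (((t:ℕ) : ℤ) + (m:ℤ)).toNat = t + m := by omega
  rw [h]

theorem coeff_polyPart (n : ℕ) (s : ℕ → D) (f : Polynomial D) (t : ℕ) :
    (polyPart n s f).coeff t = laurentCoeff n s f (t : ℤ) := by
  unfold polyPart
  rw [Polynomial.finset_sum_coeff]
  simp only [Polynomial.coeff_C_mul, Polynomial.coeff_X_pow, mul_ite, mul_one, mul_zero]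
  rw [Finset.sum_ite_eq (Finset.range f.natDegree) t
    (fun j => ∑ m ∈ Finset.Icc 1 n, f.coeff (j + m) * s m)]
  rcases lt_or_ge t f.natDegree with h | h
  · rw [if_pos (Finset.mem_range.2 h), lc_nonneg]
  · rw [if_neg (by simp [Finset.mem_range]; omega), lc_eq_zero_of_le (by omega)]

theorem sum_range_lc (n : ℕ) (s : ℕ → D) (f g : Polynomial D) (t : ℕ)
    (hg : ∀ j : ℤ, -(f.natDegree : ℤ) ≤ j → j ≤ -1 → laurentCoeff n s g j = 0) :
    ∑ a ∈ Finset.range (t + 1), f.coeff a * laurentCoeff n s g ((t : ℤ) - (a : ℤ))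
      = laurentCoeff n s (f * g) (t : ℤ) := by
  rw [lc_mul]
  set M := max (t + 1) (f.natDegree + 1) with hM
  have e1 : ∑ a ∈ Finset.range (t + 1), f.coeff a * laurentCoeff n s g ((t : ℤ) - (a : ℤ))
      = ∑ a ∈ Finset.range M, f.coeff a * laurentCoeff n s g ((t : ℤ) - (a : ℤ)) := by
    refine Finset.sum_subset (Finset.range_subset_range.2 (by omega)) fun x hx hnx => ?_
    simp only [Finset.mem_range] at hx hnx
    rcases le_or_gt x f.natDegree with h | h
    · rw [hg _ (by omega) (by omega), mul_zero]
    · rw [f.coeff_eq_zero_of_natDegree_lt h, zero_mul]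
  have e2 : ∑ a ∈ Finset.range (f.natDegree + 1), f.coeff a * laurentCoeff n s g ((t : ℤ) - (a : ℤ))
      = ∑ a ∈ Finset.range M, f.coeff a * laurentCoeff n s g ((t : ℤ) - (a : ℤ)) := by
    refine Finset.sum_subset (Finset.range_subset_range.2 (by omega)) fun x hx hnx => ?_
    simp only [Finset.mem_range] at hx hnx
    rw [f.coeff_eq_zero_of_natDegree_lt (by omega), zero_mul]
  rw [e1, e2]

theorem cross (n : ℕ) (s : ℕ → D) (f g : Polynomial D)
    (hf : ∀ j : ℤ, -(g.natDegree : ℤ) ≤ j → j ≤ -1 → laurentCoeff n s f j = 0)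
    (hg : ∀ j : ℤ, -(f.natDegree : ℤ) ≤ j → j ≤ -1 → laurentCoeff n s g j = 0) :
    f * polyPart n s g = g * polyPart n s f := by
  ext t
  rw [Polynomial.coeff_mul, Polynomial.coeff_mul,
    Finset.Nat.sum_antidiagonal_eq_sum_range_succ_mk,
    Finset.Nat.sum_antidiagonal_eq_sum_range_succ_mk]
  have key : ∀ (p q : Polynomial D),
      (∀ j : ℤ, -(p.natDegree : ℤ) ≤ j → j ≤ -1 → laurentCoeff n s q j = 0) →
      ∑ a ∈ Finset.range (t + 1), p.coeff a * (polyPart n s q).coeff (t - a)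
        = laurentCoeff n s (p * q) (t : ℤ) := by
    intro p q hq
    rw [← sum_range_lc n s p q t hq]
    refine Finset.sum_congr rfl fun a ha => ?_
    simp only [Finset.mem_range] at ha
    have e : ((t - a : ℕ) : ℤ) = (t : ℤ) - (a : ℤ) := by omega
    rw [coeff_polyPart, e]
  rw [key f g hg, key g f hf, mul_comm]

theorem rev_sum (n : ℕ) (u w : ℕ → D) (hw : ∀ j, 1 ≤ j → j ≤ n → w j = u (n + 1 - j))
    (f : Polynomial D) (M : ℕ) (hf : f.natDegree ≤ M) (i : ℕ) (h1 : 1 ≤ i) (h2 : i + M ≤ n) :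
    ∑ k ∈ Finset.range (M + 1), (Polynomial.reflect M f).coeff k * w (i + k)
      = ∑ m ∈ Finset.range (M + 1), f.coeff m * u ((n + 1 - i - M) + m) := by
  have step1 : ∑ k ∈ Finset.range (M + 1), (Polynomial.reflect M f).coeff k * w (i + k)
      = ∑ k ∈ Finset.range (M + 1), f.coeff (M - k) * w (i + k) := by
    refine Finset.sum_congr rfl fun k hk => ?_
    simp only [Finset.mem_range] at hk
    rw [Polynomial.coeff_reflect, Polynomial.revAt_le (by omega)]
  rw [step1, ← Finset.sum_range_reflect (fun k => f.coeff (M - k) * w (i + k)) (M + 1)]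
  refine Finset.sum_congr rfl fun k hk => ?_
  simp only [Finset.mem_range] at hk
  have e1 : M + 1 - 1 - k = M - k := by omega
  rw [e1]
  have e2 : M - (M - k) = k := by omega
  rw [e2, hw (i + (M - k)) (by omega) (by omega)]
  have e3 : n + 1 - (i + (M - k)) = n + 1 - i - M + k := by omega
  rw [e3]

theorem natDegree_reflect_le {f : Polynomial D} {M : ℕ} (hf : f.natDegree ≤ M) :
    (Polynomial.reflect M f).natDegree ≤ M := by
  refine Polynomial.natDegree_le_iff_coeff_eq_zero.2 fun N hN => ?_
  rw [Polynomial.coeff_reflect, Polynomial.revAt_eq_self_of_lt hN,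
    f.coeff_eq_zero_of_natDegree_lt (by omega)]

theorem natDegree_reflect_eq {f : Polynomial D} {M : ℕ} (hf : f.natDegree ≤ M)
    (h0 : f.coeff 0 ≠ 0) : (Polynomial.reflect M f).natDegree = M := by
  refine le_antisymm (natDegree_reflect_le hf) (Polynomial.le_natDegree_of_ne_zero ?_)
  rwa [Polynomial.coeff_reflect, Polynomial.revAt_le (le_refl M), Nat.sub_self]

theorem lc_neg_ann {n : ℕ} {s : ℕ → D} {f : Polynomial D}
    (hann : ∀ i, 1 ≤ i → i + f.natDegree ≤ n → E s f i = 0)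
    {j : ℤ} (h1 : -((n : ℤ) - f.natDegree) ≤ j) (h2 : j ≤ -1) : laurentCoeff n s f j = 0 := by
  have hi : j = -((-j).toNat : ℤ) := by omega
  rw [hi, lc_neg_eq_E (by omega) (by omega)]
  exact hann _ (by omega) (by omega)

section FieldSide

variable {K : Type*} [Field K]

theorem natDegree_polyPart_le (n : ℕ) (t : ℕ → K) (f : Polynomial K) {j : ℕ}
    (hj : f.natDegree ≤ j) : (polyPart n t f).coeff j = 0 := by
  rw [coeff_polyPart, lc_eq_zero_of_le (by omega)]

theorem coprime_polyPart (n L : ℕ) (t : ℕ → K) (μ : Polynomial K) (hμ0 : μ ≠ 0)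
    (hdeg : μ.natDegree = L) (hn : n = 2 * L)
    (hann : ∀ i, 1 ≤ i → i + μ.natDegree ≤ n → E t μ i = 0)
    (hmin : ∀ q : Polynomial K, q ≠ 0 →
      (∀ i, 1 ≤ i → i + q.natDegree ≤ n → E t q i = 0) → L ≤ q.natDegree) :
    IsCoprime μ (polyPart n t μ) := by
  classical
  by_contra hcop
  have hgu : ¬ IsUnit (EuclideanDomain.gcd μ (polyPart n t μ)) :=
    fun h => hcop ((EuclideanDomain.gcd_isUnit_iff).1 h)
  have hgcd0 : EuclideanDomain.gcd μ (polyPart n t μ) ≠ 0 :=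
    fun h => hμ0 (EuclideanDomain.gcd_eq_zero_iff.1 h).1
  obtain ⟨p, hpirr, hpdvd⟩ := WfDvdMonoid.exists_irreducible_factor hgu hgcd0
  have hpμ : p ∣ μ := hpdvd.trans (EuclideanDomain.gcd_dvd_left _ _)
  have hppp : p ∣ polyPart n t μ := hpdvd.trans (EuclideanDomain.gcd_dvd_right _ _)
  obtain ⟨q, hq⟩ := hpμ
  obtain ⟨tq, htq⟩ := hppp
  have hp0 : p ≠ 0 := hpirr.ne_zero
  have hq0 : q ≠ 0 := fun h => hμ0 (by rw [hq, h, mul_zero])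
  have hdp : 1 ≤ p.natDegree := hpirr.natDegree_pos
  have hdegs : p.natDegree + q.natDegree = L := by
    rw [← hdeg, hq, Polynomial.natDegree_mul hp0 hq0]
  have hdppL : p.natDegree ≤ L := by omega
  have hLpos : 1 ≤ L := by omega
  -- tq degree bound
  have htq_coeff : ∀ j : ℕ, L ≤ j → tq.coeff j = 0 := by
    intro j hj
    rcases eq_or_ne tq 0 with h | h
    · simp [h]
    · refine tq.coeff_eq_zero_of_natDegree_lt ?_
      have hpp0 : polyPart n t μ ≠ 0 := by
        rw [htq]; exact mul_ne_zero hp0 h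
      have : (polyPart n t μ).natDegree < L := by
        by_contra hc
        push_neg at hc
        exact Polynomial.leadingCoeff_ne_zero.2 hpp0
          (natDegree_polyPart_le n t μ (by omega))
      have := htq ▸ Polynomial.natDegree_mul hp0 h
      omega
  set g : ℤ → K := fun z =>
    laurentCoeff n t q z - (if 0 ≤ z then tq.coeff z.toNat else 0) with hg
  have gz0 : ∀ z : ℤ, (L : ℤ) ≤ z → g z = 0 := by
    intro z hz
    have h1 : laurentCoeff n t q z = 0 := lc_eq_zero_of_le (by omega)
    have h2 : tq.coeff z.toNat = 0 := htq_coeff _ (by omega)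
    simp [hg, h1, h2]
  set G : Polynomial K := ∑ j ∈ Finset.range (n + L), Polynomial.C (g ((j : ℤ) - n)) * Polynomial.X ^ j with hG
  have coeffG : ∀ j : ℕ, G.coeff j = if j < n + L then g ((j : ℤ) - n) else 0 := by
    intro j
    rw [hG, Polynomial.finset_sum_coeff]
    simp only [Polynomial.coeff_C_mul, Polynomial.coeff_X_pow, mul_ite, mul_one, mul_zero]
    rw [Finset.sum_ite_eq (Finset.range (n + L)) j (fun x => g ((x : ℤ) - n))]
    simp [Finset.mem_range]
  have hlcμ : ∀ j : ℤ, -(L:ℤ) ≤ j → j ≤ -1 → laurentCoeff n t μ j = 0 := by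
    intro j h1 h2
    exact lc_neg_ann hann (by rw [hdeg]; omega) h2
  have conv : ∀ z : ℤ, -(L:ℤ) ≤ z →
      ∑ a ∈ Finset.range (p.natDegree + 1), p.coeff a * g (z - (a:ℤ)) = 0 := by
    intro z hz
    have expand : ∑ a ∈ Finset.range (p.natDegree + 1), p.coeff a * g (z - (a:ℤ))
        = (∑ a ∈ Finset.range (p.natDegree + 1), p.coeff a * laurentCoeff n t q (z - (a:ℤ)))
          - ∑ a ∈ Finset.range (p.natDegree + 1),
              p.coeff a * (if 0 ≤ z - (a:ℤ) then tq.coeff (z - (a:ℤ)).toNat else 0) := by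
      rw [← Finset.sum_sub_distrib]
      exact Finset.sum_congr rfl fun a _ => by rw [hg]; ring
    rw [expand, ← lc_mul, coeff_mul_int, ← hq, ← htq]
    rcases le_or_gt 0 z with h0 | h0
    · rw [if_pos h0, coeff_polyPart n t μ z.toNat]
      have hzz : ((z.toNat : ℕ) : ℤ) = z := by omega
      rw [hzz, sub_self]
    · rw [if_neg (by omega), hlcμ z hz (by omega), sub_zero]
  -- coefficients of p * G vanish in high range
  have hPG : ∀ j : ℕ, n - L ≤ j → (p * G).coeff j = 0 := by
    intro j hj
    rw [Polynomial.coeff_mul, Finset.Nat.sum_antidiagonal_eq_sum_range_succ_mk]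
    have hdpj : p.natDegree + 1 ≤ j + 1 := by omega
    rw [← Finset.sum_subset (Finset.range_subset_range.2 hdpj) (fun x hx hnx => ?_)]
    · have e : ∀ a ∈ Finset.range (p.natDegree + 1),
          p.coeff a * G.coeff (j - a) = p.coeff a * g ((j : ℤ) - n - (a : ℤ)) := by
        intro a ha
        simp only [Finset.mem_range] at ha
        congr 1
        rcases lt_or_ge (j - a) (n + L) with h | h
        · rw [coeffG, if_pos h]
          congr 1
          omega
        · rw [coeffG, if_neg (by omega), gz0 _ (by omega)]
      rw [Finset.sum_congr rfl e]
      exact conv ((j : ℤ) - n) (by omega)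
    · simp only [Finset.mem_range] at hx hnx
      rw [p.coeff_eq_zero_of_natDegree_lt (by omega), zero_mul]
  -- hence G has low degree
  have hGcoeff : ∀ j : ℕ, n - L - p.natDegree ≤ j → G.coeff j = 0 := by
    intro j hj
    rcases eq_or_ne G 0 with h | h
    · simp [h]
    by_contra hc
    have hjG : j ≤ G.natDegree := Polynomial.le_natDegree_of_ne_zero hc
    have hPG0 : p * G ≠ 0 := mul_ne_zero hp0 h
    have hdegPG : (p * G).natDegree = p.natDegree + G.natDegree :=
      Polynomial.natDegree_mul hp0 h
    have := hPG (p * G).natDegree (by omega)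
    exact Polynomial.leadingCoeff_ne_zero.2 hPG0 this
  -- q annihilates s_1..s_n
  have hannq : ∀ i, 1 ≤ i → i + q.natDegree ≤ n → E t q i = 0 := by
    intro i h1 h2
    rw [← lc_neg_eq_E h1 h2]
    have hiL : i ≤ L + p.natDegree := by omega
    have e1 : laurentCoeff n t q (-(i:ℤ)) = g (-(i:ℤ)) := by
      rw [hg]
      simp only
      rw [if_neg (by omega), sub_zero]
    have e2 : g (-(i:ℤ)) = G.coeff (n - i) := by
      rw [coeffG, if_pos (by omega)]
      congr 1
      omega
    rw [e1, e2]
    exact hGcoeff _ (by omega)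
  have := hmin q hq0 hannq
  omega

theorem engine (n L : ℕ) (t : ℕ → K) (μ : Polynomial K) (hμ0 : μ ≠ 0)
    (hdeg : μ.natDegree = L) (hn : n = 2 * L)
    (hann : ∀ i, 1 ≤ i → i + μ.natDegree ≤ n → E t μ i = 0)
    (hmin : ∀ q : Polynomial K, q ≠ 0 →
      (∀ i, 1 ≤ i → i + q.natDegree ≤ n → E t q i = 0) → L ≤ q.natDegree)
    (g : Polynomial K) (hg0 : g ≠ 0) (hgdeg : g.natDegree ≤ L)
    (hgann : ∀ i, 1 ≤ i → i ≤ L → E t g i = 0) :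
    g.natDegree = L ∧ ∃ a : K, a ≠ 0 ∧ g = Polynomial.C a * μ := by
  have hcop := coprime_polyPart n L t μ hμ0 hdeg hn hann hmin
  have hlcg : ∀ j : ℤ, -(μ.natDegree : ℤ) ≤ j → j ≤ -1 → laurentCoeff n t g j = 0 := by
    intro j h1 h2
    have hi : j = -(((-j).toNat : ℕ) : ℤ) := by omega
    rw [hi, lc_neg_eq_E (by omega) (by rw [hdeg] at h1; omega)]
    exact hgann _ (by omega) (by rw [hdeg] at h1; omega)
  have hlcμ : ∀ j : ℤ, -(g.natDegree : ℤ) ≤ j → j ≤ -1 → laurentCoeff n t μ j = 0 :=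
    fun j h1 h2 => lc_neg_ann hann (by rw [hdeg]; omega) h2
  have hcross := cross n t μ g hlcμ hlcg
  have hdvd : μ ∣ g * polyPart n t μ := ⟨polyPart n t g, hcross.symm⟩
  have hμg : μ ∣ g := hcop.dvd_of_dvd_mul_right hdvd
  have hL : L ≤ g.natDegree := hdeg ▸ Polynomial.natDegree_le_of_dvd hμg hg0
  obtain ⟨c, hc⟩ := hμg
  have hc0 : c ≠ 0 := fun h => hg0 (by rw [hc, h, mul_zero])
  have hdegc : c.natDegree = 0 := by
    have := hc ▸ Polynomial.natDegree_mul hμ0 hc0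
    omega
  obtain ⟨a, ha⟩ : ∃ a : K, c = Polynomial.C a := ⟨c.coeff 0, Polynomial.eq_C_of_natDegree_eq_zero hdegc⟩
  refine ⟨by omega, a, ?_, ?_⟩
  · intro h
    rw [h, map_zero] at ha
    exact hc0 ha
  · rw [hc, ha, mul_comm]

open Module in
theorem exists_phi (n L : ℕ) (t : ℕ → K) (μ : Polynomial K) (hμ0 : μ ≠ 0)
    (hdeg : μ.natDegree = L) (hn : n = 2 * L)
    (hann : ∀ i, 1 ≤ i → i + μ.natDegree ≤ n → E t μ i = 0)
    (hmin : ∀ q : Polynomial K, q ≠ 0 →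
      (∀ i, 1 ≤ i → i + q.natDegree ≤ n → E t q i = 0) → L ≤ q.natDegree)
    (hμc : μ.coeff 0 = 0) :
    ∃ φ : Polynomial K, φ.coeff 0 ≠ 0 ∧ φ.natDegree ≤ L + 1 ∧
      ∀ i, 1 ≤ i → i + 1 ≤ L → ∑ m ∈ Finset.range (L + 2), φ.coeff m * t (i + m) = 0 := by
  classical
  have hL : 1 ≤ L := by
    by_contra h
    have h0 : μ.natDegree = 0 := by omega
    have ha := Polynomial.eq_C_of_natDegree_eq_zero h0
    rw [ha, hμc, map_zero] at hμ0
    exact hμ0 rfl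
  set A : Matrix (Fin (L - 1)) (Fin (L + 2)) K :=
    Matrix.of (fun i m => t ((i : ℕ) + 1 + (m : ℕ))) with hA
  set Φ := A.mulVecLin with hΦdef
  set ext : (Fin (L + 2) → K) → ℕ → K :=
    fun c m => if h : m < L + 2 then c ⟨m, h⟩ else 0 with hextdef
  have hext : ∀ (c : Fin (L + 2) → K) (m : Fin (L + 2)), ext c (m : ℕ) = c m := by
    intro c m
    simp [hextdef, m.isLt]
  have hΦ_apply : ∀ (c : Fin (L + 2) → K) (i : Fin (L - 1)),
      Φ c i = ∑ m ∈ Finset.range (L + 2), t ((i : ℕ) + 1 + m) * ext c m := by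
    intro c i
    rw [hΦdef, Matrix.mulVecLin_apply]
    rw [show A.mulVec c i = ∑ m : Fin (L + 2), A i m * c m from rfl]
    rw [← Fin.sum_univ_eq_sum_range (fun m => t ((i : ℕ) + 1 + m) * ext c m) (L + 2)]
    exact Finset.sum_congr rfl fun m _ => by rw [hext, hA]; rfl
  have hker3 : 3 ≤ finrank K (LinearMap.ker Φ) := by
    have h1 := LinearMap.finrank_range_add_finrank_ker Φ
    have h2 : finrank K (Fin (L + 2) → K) = L + 2 := Module.finrank_fin_fun K
    have h3 : finrank K (LinearMap.range Φ) ≤ L - 1 := by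
      have h4 := Submodule.finrank_le (LinearMap.range Φ)
      rwa [Module.finrank_fin_fun K] at h4
    omega
  -- the coefficient vector of X * μ
  set w : Fin (L + 2) → K :=
    (fun m : Fin (L + 2) => if (m : ℕ) = 0 then 0 else μ.coeff ((m : ℕ) - 1)) with hwdef
  have hwker : w ∈ LinearMap.ker Φ := by
    rw [LinearMap.mem_ker]
    funext i
    rw [hΦ_apply]
    have hterm : ∀ m : ℕ, m < L + 2 →
        t ((i : ℕ) + 1 + m) * ext w m
          = (if m = 0 then 0 else μ.coeff (m - 1) * t ((i : ℕ) + 1 + m)) := by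
      intro m hm
      have : ext w m = if m = 0 then 0 else μ.coeff (m - 1) := by
        simp only [hextdef, hwdef, dif_pos hm]
      rw [this]
      split_ifs <;> ring
    rw [Finset.sum_congr rfl fun m hm => hterm m (Finset.mem_range.1 hm)]
    rw [Finset.sum_range_succ']
    rw [if_pos rfl, add_zero]
    have hE := hann ((i : ℕ) + 2) (by omega) (by rw [hdeg]; omega)
    rw [E, hdeg] at hE
    refine Eq.trans ?_ hE
    refine Finset.sum_congr rfl fun k hk => ?_
    rw [if_neg (Nat.succ_ne_zero k), Nat.add_sub_cancel]
    have e : (i : ℕ) + 1 + (k + 1) = (i : ℕ) + 2 + k := by omega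
    rw [e]
  have hw0 : w ≠ 0 := by
    intro h
    have h1 : w ⟨L + 1, by omega⟩ = 0 := by rw [h]; rfl
    rw [hwdef] at h1
    simp only [Nat.add_sub_cancel] at h1
    have h2 : μ.coeff L ≠ 0 := by
      rw [← hdeg]
      exact Polynomial.leadingCoeff_ne_zero.2 hμ0
    exact h2 (by simpa using h1)
  -- classification of kernel vectors with zero first coordinate annihilating also at shift 1
  have hclass : ∀ c : Fin (L + 2) → K, c ∈ LinearMap.ker Φ → c 0 = 0 →
      (∑ m ∈ Finset.range (L + 2), ext c m * t m) = 0 → ∃ a : K, c = a • w := by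
    intro c hcker hc0 hβ
    have hc0' : ext c 0 = 0 := by
      rw [show (0 : ℕ) = ((0 : Fin (L + 2)) : ℕ) from rfl, hext]
      exact hc0
    set ψ : Polynomial K :=
      ∑ m ∈ Finset.range (L + 1), Polynomial.C (ext c (m + 1)) * Polynomial.X ^ m with hψ
    have hψcoeff : ∀ k : ℕ, ψ.coeff k = if k < L + 1 then ext c (k + 1) else 0 := by
      intro k
      rw [hψ, Polynomial.finset_sum_coeff]
      simp only [Polynomial.coeff_C_mul, Polynomial.coeff_X_pow, mul_ite, mul_one, mul_zero]
      rw [Finset.sum_ite_eq (Finset.range (L + 1)) k (fun x => ext c (x + 1))]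
      simp [Finset.mem_range]
    have hψdeg : ψ.natDegree ≤ L :=
      Polynomial.natDegree_le_iff_coeff_eq_zero.2 fun N hN => by
        rw [hψcoeff, if_neg (by omega)]
    rcases eq_or_ne ψ 0 with h0 | h0
    · refine ⟨0, ?_⟩
      funext m
      rw [Pi.smul_apply, zero_smul]
      rcases Nat.eq_zero_or_pos (m : ℕ) with h | h
      · have : m = 0 := Fin.ext h
        rw [this]; exact hc0
      · have e1 : c m = ext c ((m : ℕ) - 1 + 1) := by
          rw [show (m : ℕ) - 1 + 1 = (m : ℕ) by omega, hext]
        have e2 : ext c ((m : ℕ) - 1 + 1) = ψ.coeff ((m : ℕ) - 1) := by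
          rw [hψcoeff, if_pos (by omega)]
        rw [e1, e2, h0, Polynomial.coeff_zero]
    · have hgann : ∀ i, 1 ≤ i → i ≤ L → E t ψ i = 0 := by
        intro i h1 h2
        have hE : E t ψ i = ∑ m ∈ Finset.range (L + 1), ext c (m + 1) * t (i + m) := by
          rw [E, ← sum_range_coeff_congr hψdeg (fun k => t (i + k))]
          exact Finset.sum_congr rfl fun k hk => by
            rw [hψcoeff, if_pos (Finset.mem_range.1 hk)]
        rcases eq_or_lt_of_le h1 with h | h
        · -- i = 1, use hβ
          rw [hE, ← h]
          rw [Finset.sum_range_succ'] at hβ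
          rw [hc0', zero_mul, add_zero] at hβ
          rw [← hβ]
          exact Finset.sum_congr rfl fun k hk => by rw [Nat.add_comm 1 k]
        · -- i ≥ 2, use kernel condition
          have hi2 : 2 ≤ i := h
          have hmem : i - 2 < L - 1 := by omega
          have hk := congrFun (LinearMap.mem_ker.1 hcker) ⟨i - 2, hmem⟩
          rw [hΦ_apply] at hk
          simp only [Pi.zero_apply] at hk
          rw [Finset.sum_range_succ'] at hk
          rw [hc0', mul_zero, add_zero] at hk
          rw [hE, ← hk]
          refine Finset.sum_congr rfl fun k hk' => ?_
          have e : (i - 2 : ℕ) + 1 + (k + 1) = i + k := by omega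
          rw [e]
          ring
      obtain ⟨hψL, a, ha0, haψ⟩ :=
        engine n L t μ hμ0 hdeg hn hann hmin ψ h0 hψdeg hgann
      refine ⟨a, ?_⟩
      funext m
      rw [Pi.smul_apply, smul_eq_mul]
      rcases Nat.eq_zero_or_pos (m : ℕ) with h | h
      · have hm0 : m = 0 := Fin.ext h
        rw [hm0, hc0, hwdef]
        simp
      · have e1 : c m = ψ.coeff ((m : ℕ) - 1) := by
          rw [hψcoeff, if_pos (by omega),
            show (m : ℕ) - 1 + 1 = (m : ℕ) by omega, hext]
        have e2 : w m = μ.coeff ((m : ℕ) - 1) := by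
          rw [hwdef]
          simp only [if_neg (by omega : ¬ (m : ℕ) = 0)]
        rw [e1, e2, haψ, Polynomial.coeff_C_mul]
  -- main dichotomy
  by_cases hEx : ∃ c ∈ LinearMap.ker Φ, c 0 ≠ 0
  · obtain ⟨c, hcker, hc0⟩ := hEx
    set φ : Polynomial K :=
      ∑ m ∈ Finset.range (L + 2), Polynomial.C (ext c m) * Polynomial.X ^ m with hφ
    have hφcoeff : ∀ k : ℕ, φ.coeff k = if k < L + 2 then ext c k else 0 := by
      intro k
      rw [hφ, Polynomial.finset_sum_coeff]
      simp only [Polynomial.coeff_C_mul, Polynomial.coeff_X_pow, mul_ite, mul_one, mul_zero]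
      rw [Finset.sum_ite_eq (Finset.range (L + 2)) k (fun x => ext c x)]
      simp [Finset.mem_range]
    refine ⟨φ, ?_, ?_, ?_⟩
    · rw [hφcoeff, if_pos (by omega)]
      rw [show (0 : ℕ) = ((0 : Fin (L + 2)) : ℕ) from rfl, hext]
      exact hc0
    · exact Polynomial.natDegree_le_iff_coeff_eq_zero.2 fun N hN => by
        rw [hφcoeff, if_neg (by omega)]
    · intro i h1 h2
      have hmem : i - 1 < L - 1 := by omega
      have hk := congrFun (LinearMap.mem_ker.1 hcker) ⟨i - 1, hmem⟩
      rw [hΦ_apply] at hk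
      simp only [Pi.zero_apply] at hk
      rw [← hk]
      refine Finset.sum_congr rfl fun m hm => ?_
      rw [hφcoeff, if_pos (Finset.mem_range.1 hm)]
      have e : (i - 1 : ℕ) + 1 + m = i + m := by omega
      rw [e]
      ring
  · exfalso
    push_neg at hEx
    set β : (Fin (L + 2) → K) →ₗ[K] K :=
      { toFun := fun c => ∑ m : Fin (L + 2), c m * t (m : ℕ)
        map_add' := fun x y => by
          simp only [Pi.add_apply, add_mul]
          rw [Finset.sum_add_distrib]
        map_smul' := fun a x => by
          simp only [Pi.smul_apply, smul_eq_mul, RingHom.id_apply]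
          rw [Finset.mul_sum]
          exact Finset.sum_congr rfl fun m _ => by ring } with hβdef
    have hβrange : ∀ c : Fin (L + 2) → K,
        β c = ∑ m ∈ Finset.range (L + 2), ext c m * t m := by
      intro c
      rw [show β c = ∑ m : Fin (L + 2), c m * t (m : ℕ) from rfl]
      rw [← Fin.sum_univ_eq_sum_range (fun m => ext c m * t m) (L + 2)]
      exact Finset.sum_congr rfl fun m _ => by rw [hext]
    set Tβ : LinearMap.ker Φ →ₗ[K] K := β.comp (LinearMap.ker Φ).subtype with hTβ
    have h1 := LinearMap.finrank_range_add_finrank_ker Tβ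
    have h2 : finrank K (LinearMap.range Tβ) ≤ 1 := by
      have := Submodule.finrank_le (LinearMap.range Tβ)
      rwa [Module.finrank_self] at this
    have hwker' : (⟨w, hwker⟩ : LinearMap.ker Φ) ≠ 0 := by
      intro h
      exact hw0 (by simpa using congrArg Subtype.val h)
    have h3 : finrank K (LinearMap.ker Tβ) ≤ 1 := by
      have hle : LinearMap.ker Tβ ≤ Submodule.span K {(⟨w, hwker⟩ : LinearMap.ker Φ)} := by
        intro x hx
        have hβx : β (x : Fin (L + 2) → K) = 0 := hx
        rw [hβrange] at hβx
        obtain ⟨a, ha⟩ := hclass (x : Fin (L + 2) → K) x.2 (hEx _ x.2) hβx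
        refine Submodule.mem_span_singleton.2 ⟨a, ?_⟩
        ext1
        simpa using ha.symm
      calc finrank K (LinearMap.ker Tβ)
          ≤ finrank K (Submodule.span K {(⟨w, hwker⟩ : LinearMap.ker Φ)}) :=
            Submodule.finrank_mono hle
        _ = 1 := finrank_span_singleton hwker'
    omega

end FieldSide

section Transfer

variable {D : Type*} [CommRing D] [IsDomain D]

theorem E_map {K : Type*} [CommRing K] (φ : D →+* K) (hφ : Function.Injective φ)
    (s : ℕ → D) (f : Polynomial D) (i : ℕ) :
    E (fun m => φ (s m)) (f.map φ) i = φ (E s f i) := by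
  unfold E
  rw [Polynomial.natDegree_map_eq_of_injective hφ, map_sum]
  exact Finset.sum_congr rfl fun k _ => by rw [map_mul, Polynomial.coeff_map]

theorem LC_le {n : ℕ} {s : ℕ → D} {f : Polynomial D} (hf : f ≠ 0) (ha : Annihilates n s f) :
    LC n s ≤ f.natDegree :=
  Nat.sInf_le ⟨f, hf, ha, rfl⟩

theorem LC_set_nonempty (n : ℕ) (s : ℕ → D) :
    {d | ∃ f : Polynomial D, f ≠ 0 ∧ Annihilates n s f ∧ f.natDegree = d}.Nonempty := by
  refine ⟨n, Polynomial.X ^ n, pow_ne_zero n Polynomial.X_ne_zero, Or.inr fun j h1 h2 => ?_,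
    Polynomial.natDegree_X_pow n⟩
  rw [Polynomial.natDegree_X_pow] at h1
  omega

theorem le_LC {n : ℕ} {s : ℕ → D} {d : ℕ}
    (h : ∀ f : Polynomial D, f ≠ 0 → Annihilates n s f → d ≤ f.natDegree) : d ≤ LC n s := by
  refine le_csInf (LC_set_nonempty n s) ?_
  rintro e ⟨f, hf0, hfa, rfl⟩
  exact h f hf0 hfa

theorem descend (n : ℕ) (s : ℕ → D) (q : Polynomial (FractionRing D)) (hq0 : q ≠ 0)
    (hqann : ∀ i, 1 ≤ i → i + q.natDegree ≤ n →
      E (fun m => algebraMap D (FractionRing D) (s m)) q i = 0) :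
    ∃ q' : Polynomial D, q' ≠ 0 ∧ Annihilates n s q' ∧ q'.natDegree = q.natDegree := by
  set K := FractionRing D
  set φ := algebraMap D K with hφdef
  have hφ : Function.Injective φ := IsFractionRing.injective D K
  obtain ⟨b, hb⟩ := IsLocalization.integerNormalization_map_to_map (nonZeroDivisors D) q
  set q' := IsLocalization.integerNormalization (nonZeroDivisors D) q with hq'
  have hb0 : φ (b : D) ≠ 0 := fun h =>
    nonZeroDivisors.coe_ne_zero b (hφ (by rw [h, map_zero]))
  have hCform : q'.map φ = Polynomial.C (φ (b : D)) * q := by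
    rw [hb]
    ext i
    rw [Polynomial.coeff_smul, Polynomial.coeff_C_mul, Algebra.smul_def]
  have hq'0 : q' ≠ 0 := fun h => hq0 (IsFractionRing.integerNormalization_eq_zero_iff.1 h)
  have hdeg' : q'.natDegree = q.natDegree := by
    rw [← Polynomial.natDegree_map_eq_of_injective hφ q', hCform,
      Polynomial.natDegree_C_mul hb0]
  refine ⟨q', hq'0, ?_, hdeg'⟩
  rw [annihilates_iff]
  refine Or.inr fun i h1 h2 => ?_
  apply hφ
  rw [map_zero, ← E_map φ hφ, hCform]
  have hdegC : (Polynomial.C (φ (b : D)) * q).natDegree = q.natDegree :=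
    Polynomial.natDegree_C_mul hb0
  have hEC : E (fun m => φ (s m)) (Polynomial.C (φ (b : D)) * q) i
      = φ (b : D) * E (fun m => φ (s m)) q i := by
    unfold E
    rw [hdegC, Finset.mul_sum]
    exact Finset.sum_congr rfl fun k _ => by rw [Polynomial.coeff_C_mul]; ring
  rw [hEC, hqann i h1 (by omega), mul_zero]

end Transfer

end Stmt8

theorem stmt_8 {D : Type*} [CommRing D] [IsDomain D] [UniqueFactorizationMonoid D]
    (n : ℕ) (s : ℕ → D) (hn : n = 2 * LC n s)
    (μ : Polynomial D) (hμ : IsMinPoly n s μ) :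
    (μ.eval 0 ≠ 0 → LC n (fun j => s (n + 1 - j)) = LC n s) ∧
    (μ.eval 0 = 0 → LC n (fun j => s (n + 1 - j)) = LC n s + 1) := by
  classical
  open Stmt8 in
  obtain ⟨hμ0, hμann, hμdeg⟩ := hμ
  set L := LC n s with hL
  set r : ℕ → D := fun j => s (n + 1 - j) with hr
  set K := FractionRing D with hK
  set φ := algebraMap D K with hφdef
  have hφ : Function.Injective φ := IsFractionRing.injective D K
  set t : ℕ → K := fun m => φ (s m) with ht
  set rt : ℕ → K := fun m => φ (r m) with hrt
  set μK := μ.map φ with hμK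
  have hμK0 : μK ≠ 0 := (Polynomial.map_ne_zero_iff hφ).2 hμ0
  have hdegK : μK.natDegree = L := by
    rw [hμK, Polynomial.natDegree_map_eq_of_injective hφ, hμdeg]
  have hannD : ∀ i, 1 ≤ i → i + μ.natDegree ≤ n → Stmt8.E s μ i = 0 :=
    fun i h1 h2 => ((Stmt8.annihilates_iff.1 hμann).resolve_left hμ0) i h1 h2
  have hannK : ∀ i, 1 ≤ i → i + μK.natDegree ≤ n → Stmt8.E t μK i = 0 := by
    intro i h1 h2
    rw [hμK, Stmt8.E_map φ hφ, hannD i h1 (by rwa [hdegK, ← hμdeg] at h2), map_zero]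
  have hminD : ∀ f : Polynomial D, f ≠ 0 → Annihilates n s f → L ≤ f.natDegree :=
    fun f h0 ha => Stmt8.LC_le h0 ha
  have hminK : ∀ q : Polynomial K, q ≠ 0 →
      (∀ i, 1 ≤ i → i + q.natDegree ≤ n → Stmt8.E t q i = 0) → L ≤ q.natDegree := by
    intro q h0 hq
    obtain ⟨q', h0', ha', hd'⟩ := Stmt8.descend n s q h0 hq
    rw [← hd']
    exact hminD q' h0' ha'
  have hwr : ∀ j, 1 ≤ j → j ≤ n → rt j = t (n + 1 - j) := fun j _ _ => rfl
  have hws : ∀ j, 1 ≤ j → j ≤ n → t j = rt (n + 1 - j) := by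
    intro j h1 h2
    show φ (s j) = φ (s (n + 1 - (n + 1 - j)))
    congr 2
    omega
  -- lower bound for annihilators of r
  have lower : ∀ h : Polynomial D, h ≠ 0 → Annihilates n r h →
      L ≤ h.natDegree ∧ (μ.coeff 0 = 0 → L + 1 ≤ h.natDegree) := by
    intro h h0 hra
    by_cases he : h.natDegree ≤ L
    swap
    · exact ⟨by omega, fun _ => by omega⟩
    · set e := h.natDegree with hedef
      set hKp := h.map φ with hKp_def
      have hKp0 : hKp ≠ 0 := (Polynomial.map_ne_zero_iff hφ).2 h0
      have hKpdeg : hKp.natDegree = e := Polynomial.natDegree_map_eq_of_injective hφ h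
      have hannr : ∀ i, 1 ≤ i → i + e ≤ n → Stmt8.E rt hKp i = 0 := by
        intro i h1 h2
        rw [hKp_def, Stmt8.E_map φ hφ,
          ((Stmt8.annihilates_iff.1 hra).resolve_left h0) i h1 (by omega), map_zero]
      set g := Polynomial.reflect e hKp with hgdef
      have hg0 : g ≠ 0 := fun hh => hKp0 (Polynomial.reflect_eq_zero_iff.1 hh)
      have hgdeg : g.natDegree ≤ e := Stmt8.natDegree_reflect_le (le_of_eq hKpdeg)
      have hgann : ∀ i, 1 ≤ i → i ≤ L → Stmt8.E t g i = 0 := by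
        intro i h1 h2
        have hie : i + e ≤ n := by omega
        have key := Stmt8.rev_sum n rt t hws hKp e (le_of_eq hKpdeg) i h1 hie
        have e1 : Stmt8.E t g i
            = ∑ k ∈ Finset.range (e + 1), g.coeff k * t (i + k) :=
          (Stmt8.sum_range_coeff_congr hgdeg fun k => t (i + k)).symm
        have e2 : ∑ m ∈ Finset.range (e + 1), hKp.coeff m * rt ((n + 1 - i - e) + m)
            = Stmt8.E rt hKp (n + 1 - i - e) := by
          rw [Stmt8.E, hKpdeg]
        rw [e1, key, e2]
        exact hannr (n + 1 - i - e) (by omega) (by omega)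
      obtain ⟨hgL, a, ha0, hag⟩ :=
        Stmt8.engine n L t μK hμK0 hdegK hn hannK hminK g hg0 (le_trans hgdeg he) hgann
      refine ⟨by omega, fun hμc0 => ?_⟩
      exfalso
      have hgc0 : g.coeff 0 ≠ 0 := by
        rw [hgdef, Polynomial.coeff_reflect, Polynomial.revAt_le (Nat.zero_le e), Nat.sub_zero,
          ← hKpdeg]
        exact Polynomial.leadingCoeff_ne_zero.2 hKp0
      apply hgc0
      rw [hag, Polynomial.coeff_C_mul, hμK, Polynomial.coeff_map, hμc0, map_zero, mul_zero]
  have hcoeffeval : μ.coeff 0 = μ.eval 0 := Polynomial.coeff_zero_eq_eval_zero μ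
  constructor
  · intro hev
    have hμc0 : μ.coeff 0 ≠ 0 := by rwa [hcoeffeval]
    apply le_antisymm
    · -- upper bound: reflect L μ annihilates r
      set h := Polynomial.reflect L μ with hhdef
      have hdegμL : μ.natDegree ≤ L := le_of_eq hμdeg
      have hh0 : h ≠ 0 := fun hh => hμ0 (Polynomial.reflect_eq_zero_iff.1 hh)
      have hhdeg : h.natDegree = L := Stmt8.natDegree_reflect_eq hdegμL hμc0
      have hha : Annihilates n r h := by
        rw [Stmt8.annihilates_iff]
        refine Or.inr fun i h1 h2 => ?_
        rw [hhdeg] at h2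
        have key := Stmt8.rev_sum n s r (fun j _ _ => rfl) μ L hdegμL i h1 h2
        have e1 : Stmt8.E r h i = ∑ k ∈ Finset.range (L + 1), h.coeff k * r (i + k) := by
          rw [Stmt8.E, hhdeg]
        have e2 : ∑ m ∈ Finset.range (L + 1), μ.coeff m * s ((n + 1 - i - L) + m)
            = Stmt8.E s μ (n + 1 - i - L) := by
          rw [Stmt8.E, hμdeg]
        rw [e1, key, e2]
        exact hannD (n + 1 - i - L) (by omega) (by rw [hμdeg]; omega)
      have := Stmt8.LC_le hh0 hha
      omega
    · exact Stmt8.le_LC fun f h0 ha => (lower f h0 ha).1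
  · intro hev
    have hμc0 : μ.coeff 0 = 0 := by rwa [hcoeffeval]
    apply le_antisymm
    · -- upper bound L + 1
      have hμKc0 : μK.coeff 0 = 0 := by
        rw [hμK, Polynomial.coeff_map, hμc0, map_zero]
      obtain ⟨ψ, hψ0, hψdeg, hψann⟩ :=
        Stmt8.exists_phi n L t μK hμK0 hdegK hn hannK hminK hμKc0
      set hKp := Polynomial.reflect (L + 1) ψ with hKp_def
      have hψne : ψ ≠ 0 := fun hh => hψ0 (by rw [hh, Polynomial.coeff_zero])
      have hKp0 : hKp ≠ 0 := fun hh => hψne (Polynomial.reflect_eq_zero_iff.1 hh)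
      have hKpdeg : hKp.natDegree = L + 1 := Stmt8.natDegree_reflect_eq hψdeg hψ0
      have hKpann : ∀ i, 1 ≤ i → i + hKp.natDegree ≤ n → Stmt8.E rt hKp i = 0 := by
        intro i h1 h2
        rw [hKpdeg] at h2
        have key := Stmt8.rev_sum n t rt hwr ψ (L + 1) hψdeg i h1 (by omega)
        have e1 : Stmt8.E rt hKp i
            = ∑ k ∈ Finset.range (L + 1 + 1), hKp.coeff k * rt (i + k) := by
          rw [Stmt8.E, hKpdeg]
        rw [e1, key]
        have e3 : n + 1 - i - (L + 1) = L - i := by omega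
        rw [e3]
        have e4 : L + 1 + 1 = L + 2 := rfl
        rw [e4]
        exact hψann (L - i) (by omega) (by omega)
      obtain ⟨h', h'0, h'a, h'deg⟩ := Stmt8.descend n r hKp hKp0 hKpann
      have := Stmt8.LC_le h'0 h'a
      omega
    · exact Stmt8.le_LC fun f h0 ha => (lower f h0 ha).2 hμc0
end

section
/- Let D be an integral domain, s ∈ D^n, g, h ∈ D[x] with h an annihilator of s and deg(g) + deg(h) ≤ n. Write, for any nonzero polynomial f ∈ D[x], f_2 for the polynomial part of the Laurent product f·(s_1 x^{-1} + ⋯ + s_n x^{-n}), i.e. f_2 = Σ_{j≥0} (f·s̲)_j x^j. Then (g·h)_2 = g·h_2. -/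
open Polynomial

/-!
Realise `s̲ = s₁x⁻¹ + ⋯ + sₙx⁻ⁿ` as the Laurent polynomial `laurentOfSeq n s`, so that
`laurentCoeff n s f j` is the `j`-th coefficient of `f · s̲` and `f₂` collects its coefficients of
non-negative degree. Then `(g h s̲)_j = Σ_{i ≤ deg g} g_i (h s̲)_{j-i}`. Since
`j - i ≥ -deg g ≥ deg h - n`, every index that occurs lies in the range where `h s̲` agrees with
`h₂`: the coefficients of `h s̲` in degrees `deg h - n, …, -1` vanish by the annihilation
conditions. Hence `(g h s̲)_j = (g h₂)_j`.
-/

open LaurentPolynomial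

section ToLaurent

variable {R : Type*} [Semiring R]

theorem coeff_toLaurent_natCast (f : R[X]) (k : ℕ) : (toLaurent f).coeff k = f.coeff k := by
  rw [coeff_toLaurent]
  exact Finsupp.mapDomain_apply Nat.castEmbedding.injective _ k

theorem coeff_toLaurent_of_neg (f : R[X]) {k : ℤ} (hk : k < 0) : (toLaurent f).coeff k = 0 := by
  rw [coeff_toLaurent]
  exact Finsupp.mapDomain_of_notMem_range _ _ (by rintro ⟨i, rfl⟩; simp at hk; omega)

theorem coeff_toLaurent_mul (g : R[X]) (q : R[T;T⁻¹]) (j : ℤ) :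
    (toLaurent g * q).coeff j =
      ∑ i ∈ Finset.range (g.natDegree + 1), g.coeff i * q.coeff (j - i) := by
  conv_lhs => rw [g.as_sum_range_C_mul_X_pow]
  simp only [map_sum, Finset.sum_mul, AddMonoidAlgebra.coeff_sum, Finsupp.finsetSum_apply,
    toLaurent_C_mul_X_pow, ← single_eq_C_mul_T, AddMonoidAlgebra.coeff_single_mul_apply,
    neg_add_eq_sub]

end ToLaurent

section LaurentCoeff

variable {D : Type*} [CommRing D] {n : ℕ} {s : ℕ → D}

noncomputable def laurentOfSeq (n : ℕ) (s : ℕ → D) : D[T;T⁻¹] :=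
  ∑ m ∈ Finset.Icc 1 n, LaurentPolynomial.C (s m) * T (-m)

theorem coeff_laurentOfSeq_neg {m : ℕ} (hm : 1 ≤ m) (hmn : m ≤ n) :
    (laurentOfSeq n s).coeff (-m) = s m := by
  simp only [laurentOfSeq, AddMonoidAlgebra.coeff_sum, Finsupp.finsetSum_apply,
    ← single_eq_C_mul_T, AddMonoidAlgebra.coeff_single, Finsupp.single_apply, neg_inj,
    Nat.cast_inj]
  rw [Finset.sum_ite_eq', if_pos (Finset.mem_Icc.2 ⟨hm, hmn⟩)]

theorem laurentCoeff_eq_coeff_mul (f : D[X]) (j : ℤ) :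
    laurentCoeff n s f j = (toLaurent f * laurentOfSeq n s).coeff j := by
  simp only [laurentCoeff, laurentOfSeq, Finset.mul_sum, AddMonoidAlgebra.coeff_sum,
    Finsupp.finsetSum_apply, ← single_eq_C_mul_T, AddMonoidAlgebra.coeff_mul_single_apply,
    neg_neg]
  refine Finset.sum_congr rfl fun m _ => ?_
  split_ifs with hjm
  · lift j + m to ℕ using hjm with k
    rw [Int.toNat_natCast, coeff_toLaurent_natCast]
  · rw [coeff_toLaurent_of_neg f (not_le.1 hjm), zero_mul]

theorem laurentCoeff_natCast (f : D[X]) (j : ℕ) :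
    laurentCoeff n s f j = ∑ m ∈ Finset.Icc 1 n, f.coeff (j + m) * s m := by
  refine Finset.sum_congr rfl fun m _ => ?_
  rw [if_pos (by positivity)]
  norm_cast

theorem coeff_polyPart (f : D[X]) (j : ℕ) : (polyPart n s f).coeff j = laurentCoeff n s f j := by
  simp only [polyPart, finsetSum_coeff, coeff_C_mul_X_pow, laurentCoeff_natCast]
  rw [Finset.sum_ite_eq, ite_eq_left_iff]
  intro hj
  refine (Finset.sum_eq_zero fun m hm => ?_).symm
  rw [coeff_eq_zero_of_natDegree_lt, zero_mul]
  simp only [Finset.mem_range, Finset.mem_Icc] at hj hm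
  omega

theorem Annihilates.laurentCoeff_neg_eq_zero {h : D[X]} (hh : Annihilates n s h) {t : ℕ}
    (ht : 1 ≤ t) (htn : t + h.natDegree ≤ n) : laurentCoeff n s h (-t) = 0 := by
  rcases hh with rfl | hh
  · simp [laurentCoeff]
  rw [laurentCoeff_eq_coeff_mul, coeff_toLaurent_mul, ← hh (t + h.natDegree) (by omega) htn]
  refine Finset.sum_congr rfl fun k hk => ?_
  have htk : t + k ≤ n := by
    rw [Finset.mem_range] at hk
    omega
  rw [Nat.add_sub_cancel, ← coeff_laurentOfSeq_neg (s := s) (by omega) htk, Nat.cast_add,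
    neg_add']

theorem Annihilates.coeff_toLaurent_polyPart {h : D[X]} (hh : Annihilates n s h) {k : ℤ}
    (hk : h.natDegree ≤ n + k) : (toLaurent (polyPart n s h)).coeff k = laurentCoeff n s h k := by
  rcases le_or_gt 0 k with hk0 | hk0
  · lift k to ℕ using hk0
    rw [coeff_toLaurent_natCast, coeff_polyPart]
  · lift -k to ℕ using by omega with t ht
    rw [coeff_toLaurent_of_neg _ hk0, show k = -t by omega,
      hh.laurentCoeff_neg_eq_zero (by omega) (by omega)]

end LaurentCoeff

theorem stmt_9_general {D : Type*} [CommRing D] (n : ℕ) (s : ℕ → D)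
    (g h : Polynomial D) (hh : Annihilates n s h)
    (hdeg : g.natDegree + h.natDegree ≤ n) :
    polyPart n s (g * h) = g * polyPart n s h := by
  ext j
  calc (polyPart n s (g * h)).coeff j
      = ∑ i ∈ Finset.range (g.natDegree + 1), g.coeff i * laurentCoeff n s h (j - i) := by
        simp only [coeff_polyPart, laurentCoeff_eq_coeff_mul, map_mul, mul_assoc,
          coeff_toLaurent_mul]
    _ = ∑ i ∈ Finset.range (g.natDegree + 1),
          g.coeff i * (toLaurent (polyPart n s h)).coeff (j - i) := by
        refine Finset.sum_congr rfl fun i hi => ?_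
        rw [hh.coeff_toLaurent_polyPart]
        simp only [Finset.mem_range] at hi
        omega
    _ = (g * polyPart n s h).coeff j := by
        rw [← coeff_toLaurent_natCast, map_mul, coeff_toLaurent_mul]

theorem stmt_9 {D : Type*} [CommRing D] [IsDomain D] (n : ℕ) (s : ℕ → D)
    (g h : Polynomial D) (hh : Annihilates n s h)
    (hdeg : g.natDegree + h.natDegree ≤ n) :
    polyPart n s (g * h) = g * polyPart n s h :=
  stmt_9_general n s g h hh hdeg
end

section
/- Let D be an integral domain, f, g, r ∈ D[x], s ∈ D^n, with 1 ≤ k = deg(f) - deg(r) ≤ n - 1. If both f and f + r annihilate s, then r annihilates the truncated sequence (s_1,…,s_{n-k}). -/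
open Polynomial

theorem stmt_10 {D : Type*} [CommRing D] [IsDomain D] (n : ℕ) (s : ℕ → D)
    (f r : Polynomial D) (k : ℕ) (hk1 : 1 ≤ k) (hk2 : k ≤ n - 1)
    (hk : r.natDegree + k = f.natDegree)
    (hf : Annihilates n s f) (hfr : Annihilates n s (f + r)) :
    Annihilates (n - k) s r := by
  rcases eq_or_ne r 0 with hr | hr
  · exact Or.inl hr
  have hf0 : f ≠ 0 := by
    rintro rfl
    simp only [natDegree_zero] at hk
    omega
  have hdr : r.natDegree < f.natDegree := by omega
  have hdeg : (f + r).natDegree = f.natDegree :=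
    natDegree_add_eq_left_of_natDegree_lt hdr
  have hfr0 : f + r ≠ 0 := by
    intro h
    have : r = -f := eq_neg_of_add_eq_zero_right h
    rw [this, natDegree_neg] at hdr
    exact lt_irrefl _ hdr
  replace hf := hf.resolve_left hf0
  replace hfr := hfr.resolve_left hfr0
  right
  intro j hj1 hj2
  set e := r.natDegree with he
  set d := f.natDegree with hd
  have hjk1 : d + 1 ≤ j + k := by omega
  have hjk2 : j + k ≤ n := by omega
  have h1 := hf (j + k) hjk1 hjk2
  have h2 := hfr (j + k) (by rw [hdeg]; exact hjk1) hjk2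
  rw [hdeg] at h2
  have h3 : ∑ i ∈ Finset.range (d + 1), r.coeff i * s (j + k - d + i) = 0 := by
    have heq : ∑ i ∈ Finset.range (d + 1), r.coeff i * s (j + k - d + i)
        = (∑ i ∈ Finset.range (d + 1), (f + r).coeff i * s (j + k - d + i))
          - ∑ i ∈ Finset.range (d + 1), f.coeff i * s (j + k - d + i) := by
      rw [← Finset.sum_sub_distrib]
      refine Finset.sum_congr rfl fun i _ => ?_
      rw [coeff_add]; ring
    rw [heq, h1, h2, sub_zero]
  have h5 : j + k - d = j - e := by omega
  rw [h5] at h3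
  rw [← h3]
  refine Finset.sum_subset (Finset.range_subset_range.mpr (by omega)) fun i _ hi => ?_
  rw [coeff_eq_zero_of_natDegree_lt (by simp only [Finset.mem_range] at hi; omega), zero_mul]
end

section
/- For the finite field F_q, the number of sequences s ∈ F_q^n with a perfect linear complexity profile equals (q-1)^{⌈n/2⌉} · q^{⌊n/2⌋}. -/
open Polynomial

/-!
A prefix has a perfect linear complexity profile exactly when the Hankel matrices
`H_t = (s_{i+j+1})_{i,j<t}` are nonsingular for all `t ≤ ⌈n/2⌉`. Indeed, the coefficient
vector of a nonzero annihilator of degree `d` valid up to `2d+1` lies in the kernel of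
`H_{d+1}`; conversely a nonsingular `H_t` yields an annihilator of degree `t` valid up to `2t`,
and a singular `H_{t+1}` following a nonsingular `H_t` yields one of degree `t` valid up to
`2t+1`.

Now count by appending a last term. After a word of odd length the new term enters no new Hankel
matrix, a factor `q`. After a word of length `2m` it enters `H_{m+1}` only in the corner, so
`det H_{m+1}` is affine in it with slope `det H_m ≠ 0`, and exactly `q - 1` values survive.
-/

namespace PLCP

open Finset Matrix

section Hankel

variable {R : Type*}

def hankel (s : ℕ → R) (t : ℕ) : Matrix (Fin t) (Fin t) R :=
  of fun i j => s (i + j + 1)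

@[simp]
lemma hankel_submatrix_castSucc (s : ℕ → R) (t : ℕ) :
    (hankel s (t + 1)).submatrix Fin.castSucc Fin.castSucc = hankel s t :=
  rfl

lemma hankel_congr {s s' : ℕ → R} {t : ℕ} (h : ∀ i < 2 * t, s i = s' i) :
    hankel s t = hankel s' t := by
  ext i j
  exact h _ (by omega)

lemma hankel_update_of_le {s : ℕ → R} {k t : ℕ} (h : 2 * t ≤ k) (c : R) :
    hankel (Function.update s k c) t = hankel s t :=
  hankel_congr fun i hi => Function.update_of_ne (by omega) _ _

end Hankel

section Annihilator

variable {R : Type*} [CommRing R] {m : ℕ} {s : ℕ → R} {f : R[X]}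

lemma annihilates_iff (hf : f ≠ 0) :
    Annihilates m s f ↔ ∀ i, i + f.natDegree + 1 ≤ m →
      ∑ k ∈ range (f.natDegree + 1), f.coeff k * s (i + k + 1) = 0 := by
  refine (or_iff_right hf).trans ⟨fun h i hi => ?_, fun h j hj₁ hj₂ => ?_⟩
  · rw [← h (i + f.natDegree + 1) (by omega) hi]
    exact sum_congr rfl fun k _ => by congr 2; omega
  · rw [← h (j - f.natDegree - 1) (by omega)]
    exact sum_congr rfl fun k _ => by congr 2; omega

lemma Annihilates.mono {m' : ℕ} (h : m ≤ m') (hA : Annihilates m' s f) : Annihilates m s f :=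
  hA.imp_right fun hA j hj₁ hj₂ => hA j hj₁ (hj₂.trans h)

lemma annihilates_X_pow [Nontrivial R] : Annihilates m s (X ^ m) :=
  Or.inr fun j hj₁ hj₂ => by simp at hj₁; omega

lemma LC_le_natDegree (hf : f ≠ 0) (hA : Annihilates m s f) : LC m s ≤ f.natDegree :=
  Nat.sInf_le ⟨f, hf, hA, rfl⟩

lemma exists_isMinPoly [Nontrivial R] (m : ℕ) (s : ℕ → R) : ∃ μ, IsMinPoly m s μ :=
  Nat.sInf_mem (s := {d | ∃ f : R[X], f ≠ 0 ∧ Annihilates m s f ∧ f.natDegree = d})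
    ⟨m, X ^ m, (monic_X_pow m).ne_zero, annihilates_X_pow, natDegree_X_pow m⟩

end Annihilator

section Domain

variable {R : Type*} [CommRing R] [IsDomain R] {m t : ℕ} {s : ℕ → R}

lemma det_hankel_eq_zero_of_annihilates {f : R[X]} (hf : f ≠ 0) (hA : Annihilates m s f)
    (hm : 2 * f.natDegree + 1 ≤ m) : (hankel s (f.natDegree + 1)).det = 0 := by
  refine exists_mulVec_eq_zero_iff.mp
    ⟨fun k : Fin (f.natDegree + 1) => f.coeff k, fun h => ?_, funext fun i => ?_⟩
  · exact hf (leadingCoeff_eq_zero.mp (congrFun h (Fin.last _)))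
  · rw [Pi.zero_apply, ← (annihilates_iff hf).mp hA i (by omega), ← Fin.sum_univ_eq_sum_range]
    simp only [mulVec, dotProduct, hankel, of_apply]
    exact sum_congr rfl fun k _ => mul_comm _ _

/-- Regularity of `hankel s d` forces the last coordinate of `v` to be nonzero, so `v` is the
coefficient vector of a polynomial of degree exactly `d`. -/
lemma exists_annihilator_of_kernel {d r : ℕ} (hd : (hankel s d).det ≠ 0) (hr : d ≤ r)
    {v : Fin (d + 1) → R} (hv : v ≠ 0)
    (hker : ∀ i < r, ∑ k : Fin (d + 1), s (i + k + 1) * v k = 0) :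
    ∃ f : R[X], f ≠ 0 ∧ f.natDegree = d ∧ Annihilates (d + r) s f := by
  classical
  have hlast : v (Fin.last d) ≠ 0 := by
    intro h0
    have hinit : hankel s d *ᵥ Fin.init v = 0 := funext fun i => by
      simpa [mulVec, dotProduct, hankel, Fin.init, Fin.sum_univ_castSucc, h0]
        using hker i (by omega)
    exact hv (funext fun k => Fin.lastCases h0 (congrFun (eq_zero_of_mulVec_eq_zero hd hinit)) k)
  have hcoeff : (ofFn (d + 1) v).coeff d ≠ 0 := by
    rwa [ofFn_coeff_eq_val_of_lt _ d.lt_succ_self]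
  have hne : ofFn (d + 1) v ≠ 0 := fun h => hcoeff (by rw [h, coeff_zero])
  have hdeg : (ofFn (d + 1) v).natDegree = d :=
    natDegree_eq_of_le_of_coeff_ne_zero
      (Nat.lt_succ_iff.mp (ofFn_natDegree_lt (by omega) v)) hcoeff
  refine ⟨_, hne, hdeg, (annihilates_iff hne).mpr fun i hi => ?_⟩
  rw [hdeg, ← hker i (by omega), ← Fin.sum_univ_eq_sum_range]
  exact sum_congr rfl fun k _ => by rw [ofFn_coeff_eq_val_of_lt _ k.isLt, mul_comm]

lemma exists_annihilator_of_det_ne_zero (h : (hankel s t).det ≠ 0) :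
    ∃ f : R[X], f ≠ 0 ∧ f.natDegree = t ∧ Annihilates (2 * t) s f := by
  classical
  let M := (hankel s (t + 1)).updateRow (Fin.last t) 0
  obtain ⟨v, hv, hMv⟩ := exists_mulVec_eq_zero_iff.mpr
    (det_eq_zero_of_row_eq_zero (A := M) (Fin.last t) fun _ => by simp [M])
  rw [two_mul]
  refine exists_annihilator_of_kernel h le_rfl hv fun i hi => ?_
  simpa [M, mulVec, dotProduct, hankel, updateRow_apply, Fin.ext_iff, hi.ne]
    using congrFun hMv (Fin.castSucc ⟨i, hi⟩)

lemma exists_annihilator_of_det_eq_zero (h : (hankel s t).det ≠ 0)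
    (h' : (hankel s (t + 1)).det = 0) :
    ∃ f : R[X], f ≠ 0 ∧ f.natDegree = t ∧ Annihilates (2 * t + 1) s f := by
  classical
  obtain ⟨v, hv, hHv⟩ := exists_mulVec_eq_zero_iff.mpr h'
  rw [two_mul, add_assoc]
  exact exists_annihilator_of_kernel h t.le_succ hv fun i hi => congrFun hHv ⟨i, hi⟩

end Domain

def HasPLCP {R : Type*} [CommRing R] (n : ℕ) (s : ℕ → R) : Prop :=
  ∀ j, 1 ≤ j → j ≤ n → LC j s = (j + 1) / 2

theorem hasPLCP_iff_det_hankel_ne_zero {R : Type*} [CommRing R] [IsDomain R] {n : ℕ}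
    {s : ℕ → R} : HasPLCP n s ↔ ∀ t ≤ (n + 1) / 2, (hankel s t).det ≠ 0 := by
  refine ⟨fun h t ht => ?_, fun h j hj₁ hj₂ => ?_⟩
  · induction t with
    | zero => simp [det_isEmpty]
    | succ u ih =>
      intro hdet
      obtain ⟨f, hf, hdeg, hA⟩ := exists_annihilator_of_det_eq_zero (ih (by omega)) hdet
      have hle := LC_le_natDegree hf hA
      have hLC := h (2 * u + 1) (by omega) (by omega)
      omega
  · obtain ⟨f, hf, hdeg, hA⟩ := exists_annihilator_of_det_ne_zero (h ((j + 1) / 2) (by omega))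
    have hle := LC_le_natDegree hf (Annihilates.mono (m := j) (by omega) hA)
    obtain ⟨μ, hμ, hAμ, hdegμ⟩ := exists_isMinPoly j s
    by_contra hne
    exact h (μ.natDegree + 1) (by omega) (det_hankel_eq_zero_of_annihilates hμ hAμ (by omega))

section Matrices

variable {R : Type*} [CommRing R]

lemma hankel_update_corner (s : ℕ → R) (t : ℕ) (c : R) :
    hankel (Function.update s (2 * t + 1) c) (t + 1) =
      hankel s (t + 1) + single (Fin.last t) (Fin.last t) (c - s (2 * t + 1)) := by
  ext i j
  have corner : (i : ℕ) + j + 1 = 2 * t + 1 ↔ Fin.last t = i ∧ Fin.last t = j := by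
    simp only [Fin.ext_iff, Fin.val_last]
    omega
  simp only [hankel, of_apply, Matrix.add_apply, single_apply, Function.update_apply, corner]
  split_ifs with h
  · rw [corner.mpr h]
    ring
  · rw [add_zero]

lemma det_add_single_last {m : ℕ} (A : Matrix (Fin (m + 1)) (Fin (m + 1)) R) (c : R) :
    (A + single (Fin.last m) (Fin.last m) c).det =
      A.det + c * (A.submatrix Fin.castSucc Fin.castSucc).det := by
  have : A + single (Fin.last m) (Fin.last m) c =
      A.updateRow (Fin.last m) (A (Fin.last m) + c • Pi.single (Fin.last m) 1) := by
    ext i j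
    simp only [Matrix.add_apply, single_apply, updateRow_apply, Pi.add_apply, Pi.smul_apply,
      Pi.single_apply, smul_eq_mul, mul_ite, mul_one, mul_zero]
    split_ifs <;> simp_all
  rw [this, det_updateRow_add, updateRow_eq_self, det_updateRow_smul, ← adjugate_apply,
    adjugate_fin_succ_eq_det_submatrix, Fin.succAbove_last, ← two_mul, pow_mul]
  simp

lemma det_hankel_update_corner (s : ℕ → R) (t : ℕ) (c : R) :
    (hankel (Function.update s (2 * t + 1) c) (t + 1)).det =
      (hankel s (t + 1)).det + (c - s (2 * t + 1)) * (hankel s t).det := by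
  rw [hankel_update_corner, det_add_single_last, hankel_submatrix_castSucc]

end Matrices

lemma card_subtype_snoc {α : Type*} [Finite α] {n k : ℕ} {P : (Fin (n + 1) → α) → Prop}
    {Q : (Fin n → α) → Prop} (hPQ : ∀ s c, P (Fin.snoc s c) → Q s)
    (hk : ∀ s, Q s → Nat.card {c // P (Fin.snoc s c)} = k) :
    Nat.card {s // P s} = Nat.card {s // Q s} * k := by
  let e : {s // P s} ≃ Σ s : {s // Q s}, {c // P (Fin.snoc s.1 c)} :=
    { toFun := fun s => ⟨⟨Fin.init s.1, hPQ _ (s.1 (Fin.last n)) (by simpa using s.2)⟩,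
        ⟨s.1 (Fin.last n), by simpa using s.2⟩⟩
      invFun := fun x => ⟨Fin.snoc x.1.1 x.2.1, x.2.2⟩
      left_inv := fun s => by simp
      right_inv := fun x =>
        Sigma.subtype_ext (Subtype.ext (by simp)) (by simp) }
  have := Fintype.ofFinite {s // Q s}
  rw [Nat.card_congr e, Nat.card_sigma, sum_congr rfl fun s _ => hk s.1 s.2, sum_const,
    card_univ, smul_eq_mul, Nat.card_eq_fintype_card]

lemma card_add_mul_ne_zero {F : Type*} [Field F] (b : F) {a : F} (ha : a ≠ 0) :
    Nat.card {c : F // b + c * a ≠ 0} = Nat.card F - 1 := by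
  rw [← Nat.card_units, Nat.card_congr unitsEquivNeZero]
  exact Nat.card_congr
    (((Equiv.mulRight₀ a ha).trans (Equiv.addLeft b)).subtypeEquiv fun _ => Iff.rfl)

def extendSeq {α : Type*} [Zero α] (n : ℕ) (s : Fin n → α) : ℕ → α :=
  fun i => if h : 1 ≤ i ∧ i ≤ n then s ⟨i - 1, Nat.sub_one_lt_of_le h.1 h.2⟩ else 0

lemma extendSeq_snoc {α : Type*} [Zero α] (n : ℕ) (s : Fin n → α) (c : α) :
    extendSeq (n + 1) (Fin.snoc s c) = Function.update (extendSeq n s) (n + 1) c := by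
  ext i
  rcases lt_trichotomy i (n + 1) with hi | rfl | hi
  · rw [Function.update_of_ne hi.ne]
    by_cases h : 1 ≤ i
    · simp [extendSeq, Fin.snoc, h, hi.le, Nat.le_of_lt_succ hi, show i - 1 < n by omega]
    · simp [extendSeq, h]
  · simp [extendSeq, Fin.snoc]
  · simp [extendSeq, Function.update_of_ne hi.ne', hi.not_ge, (Nat.lt_of_succ_lt hi).not_ge]

section Counting

variable {R : Type*} [CommRing R]

def HankelRegular (n : ℕ) (s : Fin n → R) : Prop :=
  ∀ t ≤ (n + 1) / 2, (hankel (extendSeq n s) t).det ≠ 0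

lemma hankelRegular_snoc_of_odd (m : ℕ) (s : Fin (2 * m + 1) → R) (c : R) :
    HankelRegular (2 * m + 1 + 1) (Fin.snoc s c) ↔ HankelRegular (2 * m + 1) s := by
  rw [HankelRegular, HankelRegular, extendSeq_snoc, show (2 * m + 1 + 1 + 1) / 2 = m + 1 by omega,
    show (2 * m + 1 + 1) / 2 = m + 1 by omega]
  exact forall₂_congr fun t ht => by rw [hankel_update_of_le (by omega)]

lemma hankelRegular_snoc_of_even (m : ℕ) (s : Fin (2 * m) → R) (c : R) :
    HankelRegular (2 * m + 1) (Fin.snoc s c) ↔ HankelRegular (2 * m) s ∧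
      (hankel (extendSeq (2 * m) s) (m + 1)).det +
        c * (hankel (extendSeq (2 * m) s) m).det ≠ 0 := by
  have hzero : extendSeq (2 * m) s (2 * m + 1) = 0 := by simp [extendSeq]
  rw [HankelRegular, HankelRegular, extendSeq_snoc, show (2 * m + 1 + 1) / 2 = m + 1 by omega,
    show (2 * m + 1) / 2 = m by omega]
  simp only [Nat.le_succ_iff, or_imp, forall_and, forall_eq]
  rw [det_hankel_update_corner, hzero, sub_zero]
  exact and_congr_left' (forall₂_congr fun t ht => by rw [hankel_update_of_le (by omega)])

theorem card_hankelRegular {F : Type*} [Field F] [Finite F] (n : ℕ) :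
    Nat.card {s : Fin n → F // HankelRegular n s} =
      (Nat.card F - 1) ^ ((n + 1) / 2) * Nat.card F ^ (n / 2) := by
  induction n with
  | zero =>
    have : ∀ s : Fin 0 → F, HankelRegular 0 s := fun s t ht => by
      obtain rfl : t = 0 := by omega
      simp [det_isEmpty]
    simp [Nat.card_congr (Equiv.subtypeUnivEquiv this)]
  | succ n ih =>
    obtain ⟨m, rfl | rfl⟩ := Nat.even_or_odd' n
    · rw [card_subtype_snoc (Q := HankelRegular (2 * m)) (k := Nat.card F - 1)
        (fun s c h => ((hankelRegular_snoc_of_even m s c).mp h).1)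
        (fun s hs => ?_), ih]
      · rw [show (2 * m + 1 + 1) / 2 = m + 1 by omega, show (2 * m + 1) / 2 = m by omega,
          show 2 * m / 2 = m by omega]
        ring
      · simp only [hankelRegular_snoc_of_even, hs, true_and]
        exact card_add_mul_ne_zero _ (hs m (by omega))
    · rw [card_subtype_snoc (Q := HankelRegular (2 * m + 1)) (k := Nat.card F)
        (fun s c h => (hankelRegular_snoc_of_odd m s c).mp h)
        (fun s hs => by simp [hankelRegular_snoc_of_odd, hs]), ih]
      rw [show (2 * m + 1 + 1 + 1) / 2 = m + 1 by omega, show (2 * m + 1 + 1) / 2 = m + 1 by omega,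
        show (2 * m + 1) / 2 = m by omega]
      ring

end Counting

end PLCP

theorem stmt_11 (F : Type*) [Field F] [Fintype F] (n : ℕ) :
    Nat.card {s : Fin n → F //
      ∀ j : ℕ, 1 ≤ j → j ≤ n →
        LC j (fun i : ℕ => if h : 1 ≤ i ∧ i ≤ n then s ⟨i - 1, by omega⟩ else 0)
          = (j + 1) / 2} =
    (Fintype.card F - 1) ^ ((n + 1) / 2) * Fintype.card F ^ (n / 2) := by
  rw [← Nat.card_eq_fintype_card, ← PLCP.card_hankelRegular n]
  exact Nat.card_congr (Equiv.subtypeEquivRight fun s => PLCP.hasPLCP_iff_det_hankel_ne_zero)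
end

section
/- Let s ∈ D^n over an integral domain D with s not all-zero. A sequence s has a perfect linear complexity profile if and only if for every odd j with 1 ≤ j ≤ n, the discrepancy Δ_j of a minimal polynomial of (s_1,…,s_{j-1}) evaluated at (s_1,…,s_j) is nonzero (with the convention that the minimal polynomial of the empty prefix is 1, so Δ_1 = s_1). -/
open Polynomial

namespace StmtAux
variable {D : Type*} [CommRing D]

/-- Window sum: `V s r p = Σ_{i<p} r_i s_{p-i}`. -/
def V (s : ℕ → D) (r : Polynomial D) (p : ℕ) : D :=
  ∑ i ∈ Finset.range p, r.coeff i * s (p - i)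

lemma V_trunc (s : ℕ → D) (r : Polynomial D) {d p : ℕ} (hr : r.natDegree ≤ d)
    (hp : d + 1 ≤ p) : V s r p = ∑ i ∈ Finset.range (d + 1), r.coeff i * s (p - i) := by
  refine (Finset.sum_subset (Finset.range_subset_range.2 hp) ?_).symm
  intro i _ hi
  rw [Finset.mem_range, not_lt] at hi
  rw [Polynomial.coeff_eq_zero_of_natDegree_lt (lt_of_le_of_lt hr hi), zero_mul]

lemma V_sub (s : ℕ → D) (u v : Polynomial D) (p : ℕ) :
    V s (u - v) p = V s u p - V s v p := by
  simp [V, sub_mul, Finset.sum_sub_distrib]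

lemma V_C_mul (s : ℕ → D) (a : D) (u : Polynomial D) (p : ℕ) :
    V s (C a * u) p = a * V s u p := by
  simp [V, mul_assoc, Finset.mul_sum]

lemma V_X_pow_mul (s : ℕ → D) (u : Polynomial D) (e p : ℕ) :
    V s (X ^ e * u) p = V s u (p - e) := by
  unfold V
  have h1 : ∀ i ∈ Finset.range p, (X ^ e * u).coeff i * s (p - i)
      = if e ≤ i then u.coeff (i - e) * s (p - i) else 0 := by
    intro i _
    rw [mul_comm (X ^ e) u, Polynomial.coeff_mul_X_pow']
    split <;> simp
  rw [Finset.sum_congr rfl h1, Finset.sum_ite, Finset.sum_const_zero, add_zero]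
  have h2 : Finset.filter (fun i => e ≤ i) (Finset.range p) = Finset.Ico e p := by
    ext i; simp [Finset.mem_filter, Finset.mem_Ico, and_comm]
  rw [h2, Finset.sum_Ico_eq_sum_range]
  refine Finset.sum_congr rfl fun j _ => ?_
  have h4 : e + j - e = j := by omega
  have h3 : p - (e + j) = p - e - j := by omega
  rw [h4, h3]

lemma natDegree_reflect_le {r : Polynomial D} {d : ℕ} (hr : r.natDegree ≤ d) :
    (reflect d r).natDegree ≤ d := by
  refine Polynomial.natDegree_le_iff_coeff_eq_zero.2 fun N hN => ?_
  rw [coeff_reflect, revAt_eq_self_of_lt hN,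
    Polynomial.coeff_eq_zero_of_natDegree_lt (lt_of_le_of_lt hr hN)]

lemma natDegree_reflect_eq {r : Polynomial D} {d : ℕ} (hr : r.natDegree ≤ d)
    (h0 : r.coeff 0 ≠ 0) : (reflect d r).natDegree = d := by
  refine le_antisymm (natDegree_reflect_le hr) (Polynomial.le_natDegree_of_ne_zero ?_)
  rwa [coeff_reflect, revAt_le (le_refl d), Nat.sub_self]

lemma reflect_ne_zero {r : Polynomial D} {d : ℕ} (h0 : r.coeff 0 ≠ 0) :
    reflect d r ≠ 0 := by
  intro h
  apply h0
  have := congrArg (fun q => Polynomial.coeff q d) h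
  simpa [coeff_reflect] using this

lemma sum_reflect (s : ℕ → D) (r : Polynomial D) {d p : ℕ} (hr : r.natDegree ≤ d)
    (hp : d + 1 ≤ p) :
    ∑ k ∈ Finset.range (d + 1), (reflect d r).coeff k * s (p - d + k) = V s r p := by
  rw [V_trunc s r hr hp, ← Finset.sum_range_reflect (fun i => r.coeff i * s (p - i)) (d + 1)]
  refine Finset.sum_congr rfl fun k hk => ?_
  rw [Finset.mem_range] at hk
  have hk' : k ≤ d := by omega
  rw [coeff_reflect, revAt_le hk']
  have h1 : d + 1 - 1 - k = d - k := by omega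
  have h2 : p - d + k = p - (d - k) := by omega
  rw [h1, h2]

lemma annihilates_reflect (s : ℕ → D) (N : ℕ) (r : Polynomial D) (d : ℕ)
    (hr : r.natDegree ≤ d) (h0 : r.coeff 0 ≠ 0)
    (hw : ∀ p, d + 1 ≤ p → p ≤ N → V s r p = 0) :
    Annihilates N s (reflect d r) := by
  right
  intro j hj1 hj2
  rw [natDegree_reflect_eq hr h0] at hj1 ⊢
  rw [sum_reflect s r hr hj1]
  exact hw j hj1 hj2

lemma LC_le_of (s : ℕ → D) (N : ℕ) (r : Polynomial D) (d : ℕ)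
    (hr : r.natDegree ≤ d) (h0 : r.coeff 0 ≠ 0)
    (hw : ∀ p, d + 1 ≤ p → p ≤ N → V s r p = 0) :
    LC N s ≤ d :=
  Nat.sInf_le ⟨reflect d r, reflect_ne_zero h0,
    annihilates_reflect s N r d hr h0 hw, natDegree_reflect_eq hr h0⟩

lemma LC_le_natDegree {s : ℕ → D} {N : ℕ} {f : Polynomial D} (hf : f ≠ 0)
    (ha : Annihilates N s f) : LC N s ≤ f.natDegree :=
  Nat.sInf_le ⟨f, hf, ha, rfl⟩

lemma annihilates_mono {s : ℕ → D} {N N' : ℕ} (h : N' ≤ N) {f : Polynomial D}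
    (ha : Annihilates N s f) : Annihilates N' s f := by
  rcases ha with ha | ha
  · exact Or.inl ha
  · exact Or.inr fun j hj1 hj2 => ha j hj1 (hj2.trans h)

variable [Nontrivial D]

lemma lcset_nonempty (s : ℕ → D) (N : ℕ) :
    {d | ∃ f : Polynomial D, f ≠ 0 ∧ Annihilates N s f ∧ f.natDegree = d}.Nonempty := by
  refine ⟨N, X ^ N, fun h => one_ne_zero (α := D) (by
    simpa [Polynomial.coeff_X_pow] using congrArg (fun q => Polynomial.coeff q N) h),
    Or.inr fun j hj1 hj2 => ?_, natDegree_X_pow N⟩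
  rw [natDegree_X_pow] at hj1
  omega

lemma exists_isMinPoly (s : ℕ → D) (N : ℕ) : ∃ μ : Polynomial D, IsMinPoly N s μ := by
  have h := Nat.sInf_mem (lcset_nonempty s N)
  obtain ⟨f, h1, h2, h3⟩ := h
  exact ⟨f, h1, h2, h3⟩

lemma LC_mono (s : ℕ → D) {N N' : ℕ} (h : N' ≤ N) : LC N' s ≤ LC N s := by
  obtain ⟨μ, h1, h2, h3⟩ := exists_isMinPoly s N
  exact h3 ▸ LC_le_natDegree h1 (annihilates_mono h h2)

lemma LC_zero (s : ℕ → D) : LC 0 s = 0 :=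
  Nat.le_zero.1 (Nat.sInf_le ⟨1, one_ne_zero, Or.inr fun j hj1 hj2 => by omega,
    natDegree_one⟩)

omit [Nontrivial D] in
lemma reflect_reverse (f : Polynomial D) : reflect f.natDegree (reverse f) = f := by
  ext i
  rw [coeff_reflect, reverse, coeff_reflect, revAt_invol]

omit [Nontrivial D] in
lemma V_reverse (s : ℕ → D) (f : Polynomial D) {p : ℕ} (hp : f.natDegree + 1 ≤ p) :
    V s (reverse f) p
      = ∑ k ∈ Finset.range (f.natDegree + 1), f.coeff k * s (p - f.natDegree + k) := by
  have h := sum_reflect s (reverse f) (reverse_natDegree_le f) hp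
  rw [reflect_reverse] at h
  exact h.symm

omit [Nontrivial D] in
lemma V_reverse_eq_zero (s : ℕ → D) {N : ℕ} {f : Polynomial D} (hf : f ≠ 0)
    (ha : Annihilates N s f) {p : ℕ} (h1 : f.natDegree + 1 ≤ p) (h2 : p ≤ N) :
    V s (reverse f) p = 0 := by
  rcases ha with ha | ha
  · exact absurd ha hf
  · rw [V_reverse s f h1]; exact ha p h1 h2

omit [Nontrivial D] in
/-- Massey's lower bound, in window form. -/
lemma masseyV [IsDomain D] (s : ℕ → D) (u w : Polynomial D) (d e N : ℕ)
    (hud : u.natDegree ≤ d)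
    (hwd : w.natDegree ≤ e) (hw0 : w.coeff 0 ≠ 0)
    (hu : ∀ p, d + 1 ≤ p → p ≤ N → V s u p = 0)
    (hΔ : V s u (N + 1) ≠ 0)
    (hw : ∀ p, e + 1 ≤ p → p ≤ N + 1 → V s w p = 0) :
    N + 1 ≤ d + e := by
  by_contra hlt
  push_neg at hlt
  have hde : d + e ≤ N := by omega
  have key1 : ∑ j ∈ Finset.range (e + 1), ∑ i ∈ Finset.range (d + 1),
      w.coeff j * u.coeff i * s (N + 1 - i - j) = w.coeff 0 * V s u (N + 1) := by
    have hterm : ∀ j ∈ Finset.range (e + 1), ∑ i ∈ Finset.range (d + 1),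
        w.coeff j * u.coeff i * s (N + 1 - i - j) = w.coeff j * V s u (N + 1 - j) := by
      intro j hj
      rw [Finset.mem_range] at hj
      rw [V_trunc s u hud (by omega), Finset.mul_sum]
      refine Finset.sum_congr rfl fun i hi => ?_
      rw [show N + 1 - i - j = N + 1 - j - i from by omega, mul_assoc]
    rw [Finset.sum_congr rfl hterm]
    refine Finset.sum_eq_single_of_mem 0 (Finset.mem_range.2 (by omega)) fun j hj hj0 => ?_
    rw [Finset.mem_range] at hj
    rw [hu (N + 1 - j) (by omega) (by omega), mul_zero]
  have key2 : ∑ j ∈ Finset.range (e + 1), ∑ i ∈ Finset.range (d + 1),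
      w.coeff j * u.coeff i * s (N + 1 - i - j) = 0 := by
    rw [Finset.sum_comm]
    refine Finset.sum_eq_zero fun i hi => ?_
    rw [Finset.mem_range] at hi
    have h : ∑ j ∈ Finset.range (e + 1), w.coeff j * u.coeff i * s (N + 1 - i - j)
        = u.coeff i * V s w (N + 1 - i) := by
      rw [V_trunc s w hwd (by omega), Finset.mul_sum]
      refine Finset.sum_congr rfl fun j hj => ?_
      rw [mul_comm (w.coeff j) (u.coeff i), mul_assoc]
    rw [h, hw (N + 1 - i) (by omega) (by omega), mul_zero]
  rw [key1] at key2
  exact (mul_ne_zero hw0 hΔ) key2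

omit [Nontrivial D] in
lemma LC_lower [IsDomain D] (s : ℕ → D) (u : Polynomial D) (d N : ℕ)
    (hud : u.natDegree ≤ d)
    (hu : ∀ p, d + 1 ≤ p → p ≤ N → V s u p = 0)
    (hΔ : V s u (N + 1) ≠ 0) :
    N + 1 ≤ d + LC (N + 1) s := by
  obtain ⟨μ, hμ0, hμa, hμd⟩ := exists_isMinPoly s (N + 1)
  have hw0 : (reverse μ).coeff 0 ≠ 0 := by
    rw [coeff_zero_reverse]
    exact leadingCoeff_ne_zero.2 hμ0
  have h := masseyV s u (reverse μ) d μ.natDegree N hud (reverse_natDegree_le μ) hw0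
    hu hΔ (fun p h1 h2 => V_reverse_eq_zero s hμ0 hμa h1 h2)
  omega

omit [Nontrivial D] in
lemma disc_reflect (s : ℕ → D) (r : Polynomial D) {d N : ℕ} (hr : r.natDegree ≤ d)
    (h0 : r.coeff 0 ≠ 0) (hN : d + 1 ≤ N) :
    Disc N s (reflect d r) = V s r N := by
  unfold Disc
  rw [natDegree_reflect_eq hr h0]
  exact sum_reflect s r hr hN

omit [Nontrivial D] in
lemma annihilates_succ {s : ℕ → D} {N : ℕ} {f : Polynomial D}
    (ha : Annihilates N s f) (hD : Disc (N + 1) s f = 0) :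
    Annihilates (N + 1) s f := by
  rcases ha with ha | ha
  · exact Or.inl ha
  · refine Or.inr fun j hj1 hj2 => ?_
    rcases Nat.lt_or_ge j (N + 1) with h | h
    · exact ha j hj1 (by omega)
    · have hj : j = N + 1 := by omega
      subst hj
      exact hD

end StmtAux

theorem stmt_13 {D : Type*} [CommRing D] [IsDomain D] (n : ℕ) (s : ℕ → D)
    (hs : ∃ j : ℕ, 1 ≤ j ∧ j ≤ n ∧ s j ≠ 0) :
    (∀ j : ℕ, 1 ≤ j → j ≤ n → LC j s = (j + 1) / 2) ↔
    (∀ j : ℕ, Odd j → 1 ≤ j → j ≤ n →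
      ∀ μ : Polynomial D, IsMinPoly (j - 1) s μ → Disc j s μ ≠ 0) := by
  classical
  constructor
  · -- perfect profile implies nonzero discrepancies
    intro H j hodd hj1 hjn μ hμ
    obtain ⟨m, rfl⟩ := hodd
    intro hD
    obtain ⟨hμ1, hμ2, hμ3⟩ := hμ
    have e1 : 2 * m + 1 - 1 = 2 * m := by omega
    rw [e1] at hμ2 hμ3
    have hLCm : LC (2 * m) s = m := by
      rcases Nat.eq_zero_or_pos m with hm | hm
      · subst hm; simpa using StmtAux.LC_zero s
      · have h := H (2 * m) (by omega) (by omega)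
        omega
    have hann : Annihilates (2 * m + 1) s μ := StmtAux.annihilates_succ hμ2 hD
    have h1 : LC (2 * m + 1) s ≤ μ.natDegree := StmtAux.LC_le_natDegree hμ1 hann
    have h2 : LC (2 * m + 1) s = (2 * m + 1 + 1) / 2 := H (2 * m + 1) hj1 hjn
    omega
  · -- nonzero discrepancies imply perfect profile
    intro H
    have hn1 : 1 ≤ n := by obtain ⟨j0, h1, h2, _⟩ := hs; omega
    have hmp1 : IsMinPoly 0 s (1 : Polynomial D) :=
      ⟨one_ne_zero, Or.inr fun j hj1 hj2 => by omega,
        by rw [natDegree_one, StmtAux.LC_zero]⟩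
    have hs1 : s 1 ≠ 0 := by
      have h := H 1 odd_one le_rfl hn1 1 hmp1
      simpa [Disc] using h
    have main : ∀ m : ℕ, 2 * m + 1 ≤ n → ∃ r g : Polynomial D,
        r.coeff 0 ≠ 0 ∧ r.natDegree ≤ m + 1 ∧
        (∀ p, m + 2 ≤ p → p ≤ 2 * m + 2 → StmtAux.V s r p = 0) ∧
        g.natDegree ≤ m ∧ (∀ p, m + 1 ≤ p → p ≤ 2 * m → StmtAux.V s g p = 0) ∧
        StmtAux.V s g (2 * m + 1) ≠ 0 := by
      intro m
      induction m with
      | zero =>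
        intro h1n
        refine ⟨C (s 1) - C (s 2) * X, 1, ?_, ?_, ?_, ?_, ?_, ?_⟩
        · simpa using hs1
        · refine le_trans (natDegree_sub_le _ _) (max_le (by simp) ?_)
          exact le_trans (natDegree_mul_le) (by simp)
        · intro p h1 h2
          have hp : p = 2 := by omega
          subst hp
          simp [StmtAux.V, Finset.sum_range_succ]
          ring
        · simp
        · intro p h1 h2; omega
        · simpa [StmtAux.V] using hs1
      | succ k ih =>
        intro h1n
        obtain ⟨r, g, hr0, hrd, hrw, hgd, hgw, hgΔ⟩ := ih (by omega)
        have hlow := StmtAux.LC_lower s g k (2 * k) hgd hgw hgΔ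
        have hup := StmtAux.LC_le_of s (2 * k + 2) r (k + 1) hrd hr0 hrw
        have hmono := StmtAux.LC_mono s (show 2 * k + 1 ≤ 2 * k + 2 by omega)
        have hLC : LC (2 * k + 2) s = k + 1 := by omega
        have hμ : IsMinPoly (2 * k + 2) s (reflect (k + 1) r) :=
          ⟨StmtAux.reflect_ne_zero hr0,
            StmtAux.annihilates_reflect s _ r (k + 1) hrd hr0 hrw,
            by rw [StmtAux.natDegree_reflect_eq hrd hr0, hLC]⟩
        have hH := H (2 * k + 3) ⟨k + 1, by ring⟩ (by omega) (by omega)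
        rw [show 2 * k + 3 - 1 = 2 * k + 2 from by omega] at hH
        have hΔ0 : Disc (2 * k + 3) s (reflect (k + 1) r) ≠ 0 := hH _ hμ
        have hΔ : StmtAux.V s r (2 * k + 3) ≠ 0 := by
          rwa [StmtAux.disc_reflect s r hrd hr0 (by omega)] at hΔ0
        set δ := StmtAux.V s g (2 * k + 1) with hδ
        set Δ := StmtAux.V s r (2 * k + 3) with hΔdef
        set r' := C δ * r - C Δ * (X ^ 2 * g) with hr'def
        have hr'w : ∀ p, k + 3 ≤ p → p ≤ 2 * k + 3 → StmtAux.V s r' p = 0 := by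
          intro p h1 h2
          rw [hr'def, StmtAux.V_sub, StmtAux.V_C_mul, StmtAux.V_C_mul,
            StmtAux.V_X_pow_mul]
          rcases Nat.lt_or_ge p (2 * k + 3) with h | h
          · rw [hrw p (by omega) (by omega), hgw (p - 2) (by omega) (by omega)]
            ring
          · have hp : p = 2 * k + 3 := by omega
            subst hp
            rw [show 2 * k + 3 - 2 = 2 * k + 1 from by omega, ← hΔdef, ← hδ]
            ring
        set E := StmtAux.V s r' (2 * k + 4) with hE
        refine ⟨C Δ * r' - C E * (X ^ 1 * r), r, ?_, ?_, ?_, ?_, ?_, ?_⟩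
        · have c0 : (C Δ * r' - C E * (X ^ 1 * r)).coeff 0 = Δ * (δ * r.coeff 0) := by
            simp [hr'def, coeff_sub, Polynomial.mul_coeff_zero, Polynomial.coeff_X_pow]
          rw [c0]
          exact mul_ne_zero hΔ (mul_ne_zero hgΔ hr0)
        · refine le_trans (natDegree_sub_le _ _) (max_le ?_ ?_)
          · refine le_trans (natDegree_C_mul_le _ _) ?_
            rw [hr'def]
            refine le_trans (natDegree_sub_le _ _) (max_le ?_ ?_)
            · exact le_trans (natDegree_C_mul_le _ _) (by omega)
            · refine le_trans (natDegree_C_mul_le _ _) (le_trans natDegree_mul_le ?_)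
              rw [natDegree_X_pow]
              omega
          · refine le_trans (natDegree_C_mul_le _ _) (le_trans natDegree_mul_le ?_)
            rw [natDegree_X_pow]
            omega
        · intro p h1 h2
          rw [StmtAux.V_sub, StmtAux.V_C_mul, StmtAux.V_C_mul, StmtAux.V_X_pow_mul]
          rcases Nat.lt_or_ge p (2 * k + 4) with h | h
          · rw [hr'w p (by omega) (by omega), hrw (p - 1) (by omega) (by omega)]
            ring
          · have hp : p = 2 * k + 4 := by omega
            subst hp
            rw [show 2 * k + 4 - 1 = 2 * k + 3 from by omega, ← hE, ← hΔdef]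
            ring
        · omega
        · intro p h1 h2
          exact hrw p (by omega) (by omega)
        · rw [show 2 * (k + 1) + 1 = 2 * k + 3 from by omega]
          exact hΔ
    have vals : ∀ m : ℕ, 2 * m + 1 ≤ n →
        LC (2 * m + 1) s = m + 1 ∧ LC (2 * m + 2) s = m + 1 := by
      intro m hm
      obtain ⟨r, g, hr0, hrd, hrw, hgd, hgw, hgΔ⟩ := main m hm
      have hlow := StmtAux.LC_lower s g m (2 * m) hgd hgw hgΔ
      have hup := StmtAux.LC_le_of s (2 * m + 2) r (m + 1) hrd hr0 hrw
      have hmono := StmtAux.LC_mono s (show 2 * m + 1 ≤ 2 * m + 2 by omega)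
      omega
    intro j hj1 hjn
    rcases Nat.even_or_odd j with he | ho
    · obtain ⟨m, rfl⟩ := he
      have hm : 1 ≤ m := by omega
      have h := (vals (m - 1) (by omega)).2
      rw [show 2 * (m - 1) + 2 = m + m from by omega] at h
      omega
    · obtain ⟨m, rfl⟩ := ho
      have h := (vals m (by omega)).1
      omega
end

section
/- Let F be a field, s ∈ F^n not all zero, μ a minimal polynomial of s with μ(0) = 0, LC = deg(μ), and suppose e = n + 1 - 2·LC > 0. Then every annihilator g of s with g(0) ≠ 0 satisfies deg(g) ≥ n + 1 - LC. -/
open Polynomial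

namespace Stmt18Aux

variable {F : Type*} [Field F]

/-- auxiliary truncation polynomial -/
noncomputable def trunc' (c : ℕ → F) (d : ℕ) : Polynomial F :=
  ∑ i ∈ Finset.range d, Polynomial.C (c i) * Polynomial.X ^ i

lemma coeff_trunc' (c : ℕ → F) (d r : ℕ) :
    (trunc' c d).coeff r = if r < d then c r else 0 := by
  simp only [trunc', finset_sum_coeff, coeff_C_mul, coeff_X_pow, mul_ite, mul_one, mul_zero]
  rw [Finset.sum_ite_eq (Finset.range d) r c]
  simp [Finset.mem_range]

lemma degree_trunc' (c : ℕ → F) (d : ℕ) : (trunc' c d).degree < (d : ℕ) := by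
  rw [Polynomial.degree_lt_iff_coeff_zero]
  intro m hm
  rw [coeff_trunc', if_neg (by omega)]

/-- `x^n * (s₁ x⁻¹ + ⋯ + s_n x⁻ⁿ)` -/
noncomputable def Pgen (n : ℕ) (s : ℕ → F) : Polynomial F :=
  trunc' (fun r => s (n - r)) n

lemma coeff_Pgen (n : ℕ) (s : ℕ → F) (r : ℕ) :
    (Pgen n s).coeff r = if r < n then s (n - r) else 0 := coeff_trunc' _ _ _

lemma coeff_mul_Pgen (n : ℕ) (s : ℕ → F) (f : Polynomial F) (j : ℕ) (hj : j < n) :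
    (f * Pgen n s).coeff j = ∑ k ∈ Finset.range (j + 1), f.coeff k * s (n - j + k) := by
  rw [Polynomial.coeff_mul, Finset.Nat.sum_antidiagonal_eq_sum_range_succ_mk]
  apply Finset.sum_congr rfl
  intro k hk
  rw [Finset.mem_range] at hk
  rw [coeff_Pgen, if_pos (lt_of_le_of_lt (Nat.sub_le _ _) hj)]
  congr 2
  omega

lemma sum_shrink (f : Polynomial F) (c : ℕ → F) (m : ℕ) (hm : f.natDegree ≤ m) :
    ∑ k ∈ Finset.range (m + 1), f.coeff k * c k
      = ∑ k ∈ Finset.range (f.natDegree + 1), f.coeff k * c k := by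
  refine (Finset.sum_subset ?_ ?_).symm
  · exact Finset.range_subset_range.mpr (by omega)
  · intro k hk hk2
    rw [Finset.mem_range] at hk hk2
    rw [Polynomial.coeff_eq_zero_of_natDegree_lt (by omega), zero_mul]

lemma coeff_mul_Pgen' (n : ℕ) (s : ℕ → F) (f : Polynomial F) (j : ℕ)
    (hj : j < n) (hd : f.natDegree ≤ j) :
    (f * Pgen n s).coeff j
      = ∑ k ∈ Finset.range (f.natDegree + 1), f.coeff k * s (n - j + k) := by
  rw [coeff_mul_Pgen n s f j hj, sum_shrink f _ j hd]

/-- Lemma A : an annihilator gives a decomposition `f·P = a·Xⁿ + b`, `deg b < deg f`. -/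
lemma annih_decomp (n : ℕ) (s : ℕ → F) (f : Polynomial F) (hn : 1 ≤ n)
    (hfn : f.natDegree ≤ n) (hann : Annihilates n s f) :
    ∃ a b : Polynomial F, f * Pgen n s = a * Polynomial.X ^ n + b ∧
      b.degree < (f.natDegree : ℕ) := by
  rcases hann with rfl | hann
  · refine ⟨0, 0, by simp, ?_⟩
    rw [Polynomial.degree_zero]
    exact_mod_cast WithBot.bot_lt_coe _
  set d := f.natDegree with hd
  refine ⟨trunc' (fun i => (f * Pgen n s).coeff (n + i)) d,
    trunc' (fun i => (f * Pgen n s).coeff i) d, ?_, degree_trunc' _ _⟩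
  ext r
  rw [Polynomial.coeff_add, Polynomial.coeff_mul_X_pow', coeff_trunc', coeff_trunc']
  by_cases h1 : r < d
  · rw [if_neg (show ¬ n ≤ r by omega), if_pos h1, zero_add]
  by_cases h2 : r < n
  · -- d ≤ r < n : annihilation zone
    rw [if_neg (show ¬ n ≤ r by omega), if_neg h1, add_zero,
      coeff_mul_Pgen' n s f r h2 (by omega)]
    have h3 := hann (n - r + d) (by omega) (by omega)
    rw [show n - r + d - d = n - r from by omega] at h3
    exact h3
  · rw [if_pos (show n ≤ r by omega), if_neg h1, add_zero]
    by_cases h3 : r - n < d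
    · rw [if_pos h3, show n + (r - n) = r from by omega]
    · rw [if_neg h3]
      apply Polynomial.coeff_eq_zero_of_natDegree_lt
      calc (f * Pgen n s).natDegree ≤ f.natDegree + (Pgen n s).natDegree :=
            Polynomial.natDegree_mul_le
        _ < r := by
            have hP : (Pgen n s).natDegree ≤ n - 1 := by
              by_cases hP0 : Pgen n s = (0 : Polynomial F)
              · simp [hP0]
              · have h4 := degree_trunc' (fun r => s (n - r)) n
                rw [show trunc' (fun r => s (n - r)) n = Pgen n s from rfl] at h4
                rw [Polynomial.degree_eq_natDegree hP0, Nat.cast_lt] at h4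
                omega
            omega

/-- Lemma B : a decomposition with small `b` gives an annihilator. -/
lemma decomp_annih (n : ℕ) (s : ℕ → F) (h a b : Polynomial F)
    (hb : b.degree < (h.natDegree : ℕ))
    (heq : h * Pgen n s = a * Polynomial.X ^ n + b) :
    Annihilates n s h := by
  right
  intro j hj1 hj2
  set d := h.natDegree with hd
  have h1 : (h * Pgen n s).coeff (n - (j - d)) = 0 := by
    rw [heq, Polynomial.coeff_add, Polynomial.coeff_mul_X_pow', if_neg (by omega), zero_add]
    apply Polynomial.coeff_eq_zero_of_degree_lt
    refine lt_of_lt_of_le hb ?_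
    exact_mod_cast (by omega : d ≤ n - (j - d))
  rw [coeff_mul_Pgen' n s h (n - (j - d)) (by omega) (by omega)] at h1
  rw [show n - (n - (j - d)) = j - d from by omega] at h1
  exact h1

end Stmt18Aux

open Stmt18Aux in
theorem stmt_18 {F : Type*} [Field F] (n : ℕ) (s : ℕ → F)
    (hs : ∃ j : ℕ, 1 ≤ j ∧ j ≤ n ∧ s j ≠ 0)
    (μ : Polynomial F) (hμ : IsMinPoly n s μ) (h0 : μ.eval 0 = 0)
    (he : 2 * LC n s < n + 1)
    (g : Polynomial F) (hg : Annihilates n s g) (hg0 : g.eval 0 ≠ 0) :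
    (n : ℤ) + 1 - LC n s ≤ g.natDegree := by
  classical
  obtain ⟨hμ0, hμann, hμdeg⟩ := hμ
  by_contra hcon
  push_neg at hcon
  have hgne : g ≠ 0 := fun h => hg0 (by simp [h])
  have hL1 : 1 ≤ LC n s := by
    by_contra hL0
    have hd0 : μ.natDegree = 0 := by omega
    have hC := Polynomial.eq_C_of_natDegree_eq_zero hd0
    rw [hC] at h0
    simp only [Polynomial.eval_C] at h0
    exact hμ0 (by rw [hC, h0, map_zero])
  have hDL : g.natDegree + LC n s ≤ n := by omega
  have hn1 : 1 ≤ n := by omega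
  obtain ⟨a2, b2, hμeq, hb2⟩ := annih_decomp n s μ hn1 (by omega) hμann
  obtain ⟨a3, b3, hgeq, hb3⟩ := annih_decomp n s g hn1 (by omega) hg
  have hkey : g * (a2 * Polynomial.X ^ n + b2) = μ * (a3 * Polynomial.X ^ n + b3) := by
    rw [← hμeq, ← hgeq]; ring
  have hkey2 : (g * a2 - μ * a3) * Polynomial.X ^ n = μ * b3 - g * b2 := by
    linear_combination hkey
  -- degree bound on the right side
  have hmulb : ∀ (p q : Polynomial F) (dq : ℕ), q.degree < (dq : ℕ) →
      p.natDegree + dq ≤ n → (p * q).degree < (n : ℕ) := by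
    intro p q dq hq hle
    by_cases hp0 : p = 0
    · rw [hp0, zero_mul, Polynomial.degree_zero]
      exact_mod_cast WithBot.bot_lt_coe n
    by_cases hq0 : q = 0
    · rw [hq0, mul_zero, Polynomial.degree_zero]
      exact_mod_cast WithBot.bot_lt_coe n
    have hqd : q.natDegree < dq := by
      rwa [Polynomial.degree_eq_natDegree hq0, Nat.cast_lt] at hq
    rw [Polynomial.degree_eq_natDegree (mul_ne_zero hp0 hq0), Nat.cast_lt,
      Polynomial.natDegree_mul hp0 hq0]
    omega
  have hdeg3 : (μ * b3 - g * b2).degree < (n : ℕ) := by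
    refine lt_of_le_of_lt (Polynomial.degree_sub_le _ _) (max_lt ?_ ?_)
    · exact hmulb μ b3 g.natDegree hb3 (by omega)
    · exact hmulb g b2 μ.natDegree hb2 (by omega)
  have hzero : g * a2 - μ * a3 = 0 := by
    by_contra hne
    have hXne : (Polynomial.X : Polynomial F) ^ n ≠ 0 := pow_ne_zero _ Polynomial.X_ne_zero
    have hled : ((n : ℕ) : WithBot ℕ) ≤ ((g * a2 - μ * a3) * Polynomial.X ^ n).degree := by
      have hdvd : (Polynomial.X : Polynomial F) ^ n ∣ (g * a2 - μ * a3) * Polynomial.X ^ n :=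
        ⟨g * a2 - μ * a3, mul_comm _ _⟩
      have := Polynomial.degree_le_of_dvd hdvd (mul_ne_zero hne hXne)
      rwa [Polynomial.degree_X_pow] at this
    rw [hkey2] at hled
    exact absurd (lt_of_le_of_lt hled hdeg3) (lt_irrefl _)
  have ha : g * a2 = μ * a3 := sub_eq_zero.mp hzero
  have hb : μ * b3 = g * b2 := by
    rw [hzero, zero_mul] at hkey2
    exact (sub_eq_zero.mp hkey2.symm)
  -- split off the gcd
  set h := GCDMonoid.gcd μ g with hh
  have hh0 : h ≠ 0 := gcd_ne_zero_of_left hμ0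
  set μ' := μ / h with hμ'
  set g' := g / h with hg'
  have hcop : IsCoprime μ' g' := isCoprime_div_gcd_div_gcd hgne
  have hμfac : h * μ' = μ := EuclideanDomain.mul_div_cancel' hh0 (gcd_dvd_left μ g)
  have hgfac : h * g' = g := EuclideanDomain.mul_div_cancel' hh0 (gcd_dvd_right μ g)
  have hμ'0 : μ' ≠ 0 := left_div_gcd_ne_zero hμ0
  have ha' : g' * a2 = μ' * a3 := by
    apply mul_left_cancel₀ hh0
    rw [← mul_assoc, ← mul_assoc, hgfac, hμfac]
    exact ha
  have hb' : μ' * b3 = g' * b2 := by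
    apply mul_left_cancel₀ hh0
    rw [← mul_assoc, ← mul_assoc, hgfac, hμfac]
    exact hb
  obtain ⟨A, hA⟩ : μ' ∣ a2 := hcop.dvd_of_dvd_mul_left ⟨a3, ha'⟩
  obtain ⟨B, hB⟩ : μ' ∣ b2 := hcop.dvd_of_dvd_mul_left ⟨b3, hb'.symm⟩
  have hPdec : h * Pgen n s = A * Polynomial.X ^ n + B := by
    apply mul_left_cancel₀ hμ'0
    calc μ' * (h * Pgen n s) = μ * Pgen n s := by rw [← hμfac]; ring
      _ = a2 * Polynomial.X ^ n + b2 := hμeq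
      _ = μ' * (A * Polynomial.X ^ n + B) := by rw [hA, hB]; ring
  have hdegsum : μ.natDegree = h.natDegree + μ'.natDegree := by
    rw [← hμfac, Polynomial.natDegree_mul hh0 hμ'0]
  have hBdeg : B.degree < (h.natDegree : ℕ) := by
    by_cases hB0 : B = 0
    · rw [hB0, Polynomial.degree_zero]
      exact_mod_cast WithBot.bot_lt_coe _
    have hb2ne : b2 ≠ 0 := by rw [hB]; exact mul_ne_zero hμ'0 hB0
    have h1 : b2.natDegree < μ.natDegree := by
      rwa [Polynomial.degree_eq_natDegree hb2ne, Nat.cast_lt] at hb2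
    have h2 : b2.natDegree = μ'.natDegree + B.natDegree := by
      rw [hB, Polynomial.natDegree_mul hμ'0 hB0]
    rw [Polynomial.degree_eq_natDegree hB0, Nat.cast_lt]
    omega
  have hannh : Annihilates n s h := decomp_annih n s h A B hBdeg hPdec
  have hLCh : LC n s ≤ h.natDegree := Nat.sInf_le ⟨h, hh0, hannh, rfl⟩
  have hheval : h.eval 0 ≠ 0 := by
    intro hz
    apply hg0
    rw [← hgfac, Polynomial.eval_mul, hz, zero_mul]
  have hμ'eval : μ'.eval 0 = 0 := by
    have h5 := h0
    rw [← hμfac, Polynomial.eval_mul] at h5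
    rcases mul_eq_zero.mp h5 with h' | h'
    · exact absurd h' hheval
    · exact h'
  have hμ'deg : 1 ≤ μ'.natDegree := by
    by_contra hc
    have h00 : μ'.natDegree = 0 := by omega
    have hC := Polynomial.eq_C_of_natDegree_eq_zero h00
    rw [hC] at hμ'eval
    simp only [Polynomial.eval_C] at hμ'eval
    exact hμ'0 (by rw [hC, hμ'eval, map_zero])
  omega
end
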